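/- arXiv:math/0508449 — 3 statements merged into one kernel-verified Lean document; each statement's English description precedes it below -/
import Mathlib

section
/- For a linear connection K on the tangent bundle of a manifold E and a pseudo-Riemannian metric g, the differential of the 2-form Υ[g,K] = g_{λμ}(ḋ^λ − K_ν^λ{}_ρ ẋ^ρ d^ν) ∧ d^μ on TE vanishes if and only if the T*E-valued 2-form d_K g with components ∂_λ g_{ρμ} + g_{σμ} K_λ^σ{}_ρ, antisymmetrized in λ, μ, vanishes. -/
open scoped BigOperators

/-- Base coordinates of a chart of the manifold `E`. -/
abbrev Base (n : ℕ) := Fin n → ℝ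

/-- Induced coordinates `(x, ẋ)` on the tangent bundle `TE`;
also used for tangent vectors of `TE` (horizontal and vertical components). -/
abbrev TE (n : ℕ) := (Fin n → ℝ) × (Fin n → ℝ)

/-- Partial derivative `∂_i` on the base. -/
noncomputable def pdB {n : ℕ} (f : Base n → ℝ) (i : Fin n) (x : Base n) : ℝ :=
  fderiv ℝ f x (Pi.single i 1)

/-- Partial derivative `∂_i` on `TE`. -/
noncomputable def pdT {n : ℕ} (f : TE n → ℝ) (i : Fin n) (p : TE n) : ℝ :=
  fderiv ℝ f p (Pi.single i 1, 0)

/-- Fibre partial derivative `∂̇_i` on `TE`. -/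
noncomputable def vdT {n : ℕ} (f : TE n → ℝ) (i : Fin n) (p : TE n) : ℝ :=
  fderiv ℝ f p (0, Pi.single i 1)

/-- An `r`-form on `TE`, given by its value on `r`-tuples of (constant-coefficient)
tangent vectors of `TE` at each point. -/
def Form (n r : ℕ) := TE n → (Fin r → TE n) → ℝ

/-- Exterior differential in coordinates. -/
noncomputable def extd {n r : ℕ} (f : Form n r) : Form n (r+1) :=
  fun p v => ∑ i : Fin (r+1),
    (-1 : ℝ) ^ (i : ℕ) * fderiv ℝ (fun q => f q (v ∘ i.succAbove)) p (v i)

/-- Insertion operator `i(K)` of a tangent-valued 1-form `Kv` (given as a map sending a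
tangent vector of `TE` to a tangent vector of `TE`, pointwise) on forms. -/
noncomputable def insK {n : ℕ} (Kv : TE n → TE n → TE n) :
    {r : ℕ} → Form n r → Form n r
  | 0, _ => fun _ _ => 0
  | (r+1), f => fun p v =>
      ∑ j : Fin (r+1), (-1 : ℝ) ^ (j : ℕ) * f p (Fin.cons (Kv p (v j)) (v ∘ j.succAbove))

/-- The Frölicher–Nijenhuis Lie derivative `L[K] = i(K)∘d − d∘i(K)` of forms along a
tangent-valued 1-form. -/
noncomputable def lieK {n r : ℕ} (Kv : TE n → TE n → TE n) (f : Form n r) :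
    Form n (r+1) :=
  fun p v => insK Kv (extd f) p v - extd (insK Kv f) p v

/-- The tangent-valued 1-form `K = dˡ ⊗ (∂_l + K_l^m ∂̇_m)` associated with a
(possibly nonlinear) connection with Christoffel symbols `K : TE n → Fin n → Fin n → ℝ`. -/
noncomputable def horK {n : ℕ} (K : TE n → Fin n → Fin n → ℝ) : TE n → TE n → TE n :=
  fun p w => (w.1, fun b => ∑ a, w.1 a * K p a b)

/-- The Christoffel symbols `K_a^b = Γ_a^b{}_c(x) ẋ^c` of a linear connection. -/
noncomputable def linK {n : ℕ} (G : Base n → Fin n → Fin n → Fin n → ℝ) :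
    TE n → Fin n → Fin n → ℝ :=
  fun p a b => ∑ c, G p.1 a b c * p.2 c

/-- The 1-form `g♭ = g_{ab} ẋ^a d^b` on `TE`. -/
noncomputable def gflat {n : ℕ} (g : Base n → Fin n → Fin n → ℝ) : Form n 1 :=
  fun p v => ∑ a, ∑ b, g p.1 a b * p.2 a * (v 0).1 b

/-- Ordinary Lie derivative of a form on `TE` along a vector field `W` on `TE`. -/
noncomputable def lieV {n r : ℕ} (W : TE n → TE n) (f : Form n r) : Form n r :=
  fun p v => fderiv ℝ (fun q => f q v) p (W p)
    + ∑ i, f p (Function.update v i (fderiv ℝ W p (v i)))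

/-- The Liouville vector field `I = ẋ^a ∂̇_a` on `TE`. -/
def liou {n : ℕ} : TE n → TE n := fun p => (0, p.2)

/-- The linear horizontal `r`-form `φ = c_{e l₁…l_r}(x) ẋ^e d^{l₁}∧…∧d^{l_r}` on `TE`
with coefficients `c`. -/
noncomputable def linHorForm {n r : ℕ} (c : Base n → Fin n → (Fin r → Fin n) → ℝ) :
    Form n r :=
  fun p v => ∑ e, ∑ l : Fin r → Fin n,
    c p.1 e l * p.2 e * Matrix.det (Matrix.of fun i j => (v i).1 (l j))

/-- The 2-form `Υ[g,K] = g_{ab}(ḋ^a − K_c^a d^c) ∧ d^b` on `TE`. -/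
noncomputable def UpsG {n : ℕ} (g : Base n → Fin n → Fin n → ℝ)
    (K : TE n → Fin n → Fin n → ℝ) : Form n 2 :=
  fun p v => ∑ a, ∑ b, g p.1 a b *
    (((v 0).2 a - ∑ c, K p c a * (v 0).1 c) * (v 1).1 b
      - ((v 1).2 a - ∑ c, K p c a * (v 1).1 c) * (v 0).1 b)

/-- The curvature components `R[K]_{ab}^e = −2(∂_a K_b^e + K_a^s ∂̇_s K_b^e)`. -/
noncomputable def RawR {n : ℕ} (K : TE n → Fin n → Fin n → ℝ)
    (p : TE n) (a b e : Fin n) : ℝ :=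
  -2 * (pdT (fun q => K q b e) a p + ∑ s, K p a s * vdT (fun q => K q b e) s p)

/-- The lowered curvature components `R[K]_{abe} = g_{ce} R[K]_{ab}^c`. -/
noncomputable def Rlow {n : ℕ} (g : Base n → Fin n → Fin n → ℝ)
    (K : TE n → Fin n → Fin n → ℝ) (p : TE n) (a b e : Fin n) : ℝ :=
  ∑ c, g p.1 c e * RawR K p a b c


section StmtAux
variable {n : ℕ}

theorem contract_sym (A F : Fin n → Fin n → ℝ) (hA : ∀ a b, A a b = A b a) :
    ∑ a, ∑ b, A a b * (F a b - F b a) = 0 := by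
  have h : ∑ a : Fin n, ∑ b : Fin n, A a b * F b a = ∑ a : Fin n, ∑ b : Fin n, A a b * F a b := by
    rw [Finset.sum_comm]
    exact Finset.sum_congr rfl fun a _ => Finset.sum_congr rfl fun b _ => by rw [hA]
  simp only [mul_sub, Finset.sum_sub_distrib, h, sub_self]

theorem sc3 (f : Fin n → Fin n → Fin n → ℝ) :
    ∑ a, ∑ b, ∑ c, f a b c = ∑ c, ∑ a, ∑ b, f a b c :=
  calc ∑ a, ∑ b, ∑ c, f a b c
      = ∑ a, ∑ c, ∑ b, f a b c := Finset.sum_congr rfl fun a _ => Finset.sum_comm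
    _ = ∑ c, ∑ a, ∑ b, f a b c := Finset.sum_comm

theorem sc4 (f : Fin n → Fin n → Fin n → Fin n → ℝ) :
    ∑ a, ∑ b, ∑ c, ∑ e, f a b c e = ∑ e, ∑ a, ∑ b, ∑ c, f a b c e :=
  calc ∑ a, ∑ b, ∑ c, ∑ e, f a b c e
      = ∑ a, ∑ e, ∑ b, ∑ c, f a b c e :=
        Finset.sum_congr rfl fun a _ => sc3 (fun b c e => f a b c e)
    _ = ∑ e, ∑ a, ∑ b, ∑ c, f a b c e := Finset.sum_comm

noncomputable section

def S1 (dg : Fin n → Fin n → Fin n → ℝ) (u w0 w1 : TE n) : ℝ :=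
  ∑ a, ∑ b, (∑ d, u.1 d * dg d a b) * (w0.2 a * w1.1 b - w1.2 a * w0.1 b)

def S2 (Gx dg : Fin n → Fin n → Fin n → ℝ) (X : Fin n → ℝ) (u w0 w1 : TE n) : ℝ :=
  -∑ a, ∑ b, (∑ d, u.1 d * dg d a b) *
    ((∑ c, (∑ e, Gx c a e * X e) * w0.1 c) * w1.1 b
     - (∑ c, (∑ e, Gx c a e * X e) * w1.1 c) * w0.1 b)

def S3 (gx : Fin n → Fin n → ℝ) (dG : Fin n → Fin n → Fin n → Fin n → ℝ)
    (X : Fin n → ℝ) (u w0 w1 : TE n) : ℝ :=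
  -∑ a, ∑ b, gx a b *
    ((∑ c, (∑ e, (∑ d, u.1 d * dG d c a e) * X e) * w0.1 c) * w1.1 b
     - (∑ c, (∑ e, (∑ d, u.1 d * dG d c a e) * X e) * w1.1 c) * w0.1 b)

def S4 (gx : Fin n → Fin n → ℝ) (Gx : Fin n → Fin n → Fin n → ℝ) (u w0 w1 : TE n) : ℝ :=
  -∑ a, ∑ b, gx a b *
    ((∑ c, (∑ e, Gx c a e * u.2 e) * w0.1 c) * w1.1 b
     - (∑ c, (∑ e, Gx c a e * u.2 e) * w1.1 c) * w0.1 b)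

def Dalg (gx : Fin n → Fin n → ℝ) (Gx dg : Fin n → Fin n → Fin n → ℝ)
    (dG : Fin n → Fin n → Fin n → Fin n → ℝ) (X : Fin n → ℝ) (u w0 w1 : TE n) : ℝ :=
  ∑ a, ∑ b,
   ((∑ d, u.1 d * dg d a b) *
     ((w0.2 a - ∑ c, (∑ e, Gx c a e * X e) * w0.1 c) * w1.1 b
      - (w1.2 a - ∑ c, (∑ e, Gx c a e * X e) * w1.1 c) * w0.1 b)
   + gx a b *
     ((-∑ c, (∑ e, ((∑ d, u.1 d * dG d c a e) * X e + Gx c a e * u.2 e)) * w0.1 c) * w1.1 b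
      - (-∑ c, (∑ e, ((∑ d, u.1 d * dG d c a e) * X e + Gx c a e * u.2 e)) * w1.1 c) * w0.1 b))

theorem splitD (gx : Fin n → Fin n → ℝ) (Gx dg : Fin n → Fin n → Fin n → ℝ)
    (dG : Fin n → Fin n → Fin n → Fin n → ℝ) (X : Fin n → ℝ) (u w0 w1 : TE n) :
    Dalg gx Gx dg dG X u w0 w1
      = S1 dg u w0 w1 + S2 Gx dg X u w0 w1 + S3 gx dG X u w0 w1 + S4 gx Gx u w0 w1 := by
  unfold Dalg S1 S2 S3 S4
  simp only [← Finset.sum_neg_distrib, ← Finset.sum_add_distrib]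
  refine Finset.sum_congr rfl fun a _ => Finset.sum_congr rfl fun b _ => ?_
  simp only [neg_add, Finset.sum_add_distrib, add_mul, Finset.sum_neg_distrib]
  ring

theorem rot5 (f : Fin n → Fin n → Fin n → Fin n → Fin n → ℝ) :
    ∑ a, ∑ b, ∑ c, ∑ d, ∑ e, f a b c d e = ∑ e, ∑ a, ∑ b, ∑ c, ∑ d, f a b c d e :=
  calc ∑ a, ∑ b, ∑ c, ∑ d, ∑ e, f a b c d e
      = ∑ a, ∑ e, ∑ b, ∑ c, ∑ d, f a b c d e :=
        Finset.sum_congr rfl fun a _ => sc4 (fun b c d e => f a b c d e)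
    _ = ∑ e, ∑ a, ∑ b, ∑ c, ∑ d, f a b c d e := Finset.sum_comm

theorem pull (f : Fin n → Fin n → Fin n → ℝ) (z y : Fin n → ℝ) :
    ∑ a, ∑ b, (∑ d, f d a b) * (z a * y b) = ∑ a, z a * ∑ c, ∑ b, f c a b * y b := by
  refine Finset.sum_congr rfl fun a _ => ?_
  calc ∑ b, (∑ d, f d a b) * (z a * y b)
      = ∑ b, ∑ d, f d a b * y b * z a := by
        refine Finset.sum_congr rfl fun b _ => ?_
        rw [Finset.sum_mul]
        exact Finset.sum_congr rfl fun d _ => by ring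
    _ = ∑ d, ∑ b, f d a b * y b * z a := Finset.sum_comm
    _ = z a * ∑ c, ∑ b, f c a b * y b := by
        rw [Finset.mul_sum]
        refine Finset.sum_congr rfl fun c _ => ?_
        rw [Finset.mul_sum]
        exact Finset.sum_congr rfl fun b _ => by ring

theorem cS1 (dg : Fin n → Fin n → Fin n → ℝ) (u w0 w1 : TE n) :
    S1 dg u w0 w1 = ∑ e, (w0.2 e * (∑ c, ∑ b, u.1 c * dg c e b * w1.1 b)
                          - w1.2 e * (∑ c, ∑ b, u.1 c * dg c e b * w0.1 b)) := by
  unfold S1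
  simp only [mul_sub, Finset.sum_sub_distrib]
  rw [pull (fun d a b => u.1 d * dg d a b) w0.2 w1.1,
      pull (fun d a b => u.1 d * dg d a b) w1.2 w0.1, ← Finset.sum_sub_distrib]

theorem cS4 (gx : Fin n → Fin n → ℝ) (Gx : Fin n → Fin n → Fin n → ℝ) (u w0 w1 : TE n) :
    S4 gx Gx u w0 w1 = ∑ e, -(u.2 e *
      (∑ c, ∑ b, (∑ s, gx s b * Gx c s e) * (w0.1 c * w1.1 b - w1.1 c * w0.1 b))) := by
  have hM : S4 gx Gx u w0 w1 = ∑ a, ∑ b, ∑ c, ∑ e,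
      -(gx a b * Gx c a e * u.2 e * (w0.1 c * w1.1 b - w1.1 c * w0.1 b)) := by
    unfold S4
    simp only [← Finset.sum_neg_distrib]
    refine Finset.sum_congr rfl fun a _ => Finset.sum_congr rfl fun b _ => ?_
    simp only [Finset.sum_mul, mul_sub, Finset.mul_sum, ← Finset.sum_sub_distrib,
      ← Finset.sum_neg_distrib]
    exact Finset.sum_congr rfl fun c _ => Finset.sum_congr rfl fun e _ => by ring
  rw [hM, sc4]
  refine Finset.sum_congr rfl fun e _ => ?_
  rw [sc3]
  refine Eq.trans (Finset.sum_congr rfl fun c _ => Finset.sum_comm) ?_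
  simp only [Finset.mul_sum, Finset.sum_mul, ← Finset.sum_neg_distrib]
  refine Finset.sum_congr rfl fun c _ => Finset.sum_congr rfl fun b _ =>
    Finset.sum_congr rfl fun s _ => by ring

theorem cS2 (Gx dg : Fin n → Fin n → Fin n → ℝ) (X : Fin n → ℝ) (u w0 w1 : TE n) :
    S2 Gx dg X u w0 w1 = ∑ e, -(X e * (∑ d, ∑ c, ∑ b,
      u.1 d * (∑ s, dg d s b * Gx c s e) * (w0.1 c * w1.1 b - w1.1 c * w0.1 b))) := by
  have hM : S2 Gx dg X u w0 w1 = ∑ a, ∑ b, ∑ c, ∑ e, ∑ d,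
      -(u.1 d * dg d a b * Gx c a e * X e * (w0.1 c * w1.1 b - w1.1 c * w0.1 b)) := by
    unfold S2
    simp only [← Finset.sum_neg_distrib]
    refine Finset.sum_congr rfl fun a _ => Finset.sum_congr rfl fun b _ => ?_
    simp only [Finset.sum_mul, mul_sub, Finset.mul_sum, ← Finset.sum_sub_distrib,
      ← Finset.sum_neg_distrib]
    refine Finset.sum_congr rfl fun c _ => Finset.sum_congr rfl fun e _ =>
      Finset.sum_congr rfl fun d _ => by ring
  rw [hM,
    rot5 (fun a b c e d => -(u.1 d * dg d a b * Gx c a e * X e *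
      (w0.1 c * w1.1 b - w1.1 c * w0.1 b))),
    rot5 (fun d a b c e => -(u.1 d * dg d a b * Gx c a e * X e *
      (w0.1 c * w1.1 b - w1.1 c * w0.1 b)))]
  refine Finset.sum_congr rfl fun e _ => ?_
  refine Eq.trans (Finset.sum_congr rfl fun d _ =>
    (sc3 (fun a b c => -(u.1 d * dg d a b * Gx c a e * X e *
      (w0.1 c * w1.1 b - w1.1 c * w0.1 b)))).trans
    (Finset.sum_congr rfl fun c _ => Finset.sum_comm)) ?_
  simp only [Finset.mul_sum, Finset.sum_mul, ← Finset.sum_neg_distrib]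
  refine Finset.sum_congr rfl fun d _ => Finset.sum_congr rfl fun c _ =>
    Finset.sum_congr rfl fun b _ => Finset.sum_congr rfl fun s _ => by ring

theorem cS3 (gx : Fin n → Fin n → ℝ) (dG : Fin n → Fin n → Fin n → Fin n → ℝ)
    (X : Fin n → ℝ) (u w0 w1 : TE n) :
    S3 gx dG X u w0 w1 = ∑ e, -(X e * (∑ d, ∑ c, ∑ b,
      u.1 d * (∑ s, gx s b * dG d c s e) * (w0.1 c * w1.1 b - w1.1 c * w0.1 b))) := by
  have hM : S3 gx dG X u w0 w1 = ∑ a, ∑ b, ∑ c, ∑ e, ∑ d,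
      -(gx a b * (u.1 d * dG d c a e) * X e * (w0.1 c * w1.1 b - w1.1 c * w0.1 b)) := by
    unfold S3
    simp only [← Finset.sum_neg_distrib]
    refine Finset.sum_congr rfl fun a _ => Finset.sum_congr rfl fun b _ => ?_
    simp only [Finset.sum_mul, mul_sub, Finset.mul_sum, ← Finset.sum_sub_distrib,
      ← Finset.sum_neg_distrib]
    refine Finset.sum_congr rfl fun c _ => Finset.sum_congr rfl fun e _ =>
      Finset.sum_congr rfl fun d _ => by ring
  rw [hM,
    rot5 (fun a b c e d => -(gx a b * (u.1 d * dG d c a e) * X e *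
      (w0.1 c * w1.1 b - w1.1 c * w0.1 b))),
    rot5 (fun d a b c e => -(gx a b * (u.1 d * dG d c a e) * X e *
      (w0.1 c * w1.1 b - w1.1 c * w0.1 b)))]
  refine Finset.sum_congr rfl fun e _ => ?_
  refine Eq.trans (Finset.sum_congr rfl fun d _ =>
    (sc3 (fun a b c => -(gx a b * (u.1 d * dG d c a e) * X e *
      (w0.1 c * w1.1 b - w1.1 c * w0.1 b)))).trans
    (Finset.sum_congr rfl fun c _ => Finset.sum_comm)) ?_
  simp only [Finset.mul_sum, Finset.sum_mul, ← Finset.sum_neg_distrib]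
  refine Finset.sum_congr rfl fun d _ => Finset.sum_congr rfl fun c _ =>
    Finset.sum_congr rfl fun b _ => Finset.sum_congr rfl fun s _ => by ring

theorem claimA (gx : Fin n → Fin n → ℝ) (Gx dg : Fin n → Fin n → Fin n → ℝ)
    (v0 v1 v2 : TE n)
    (hA : ∀ a e b, dg a e b + ∑ s, gx s b * Gx a s e = dg b e a + ∑ s, gx s a * Gx b s e) :
    S1 dg v0 v1 v2 - S1 dg v1 v0 v2 + S1 dg v2 v0 v1
      + (S4 gx Gx v0 v1 v2 - S4 gx Gx v1 v0 v2 + S4 gx Gx v2 v0 v1) = 0 := by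
  rw [cS1, cS1, cS1, cS4, cS4, cS4]
  simp only [← Finset.sum_sub_distrib, ← Finset.sum_add_distrib]
  refine Finset.sum_eq_zero fun e _ => ?_
  have hsplitA : ∀ (P Q : Fin n → ℝ),
      ∑ c, ∑ b, (dg c e b + ∑ s, gx s b * Gx c s e) * (P c * Q b - Q c * P b)
      = ((∑ c, ∑ b, P c * dg c e b * Q b) - (∑ c, ∑ b, Q c * dg c e b * P b))
        + ∑ c, ∑ b, (∑ s, gx s b * Gx c s e) * (P c * Q b - Q c * P b) := by
    intro P Q
    simp only [← Finset.sum_sub_distrib, ← Finset.sum_add_distrib]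
    exact Finset.sum_congr rfl fun c _ => Finset.sum_congr rfl fun b _ => by ring
  have hz : ∀ (P Q : Fin n → ℝ),
      ((∑ c, ∑ b, P c * dg c e b * Q b) - (∑ c, ∑ b, Q c * dg c e b * P b))
        + ∑ c, ∑ b, (∑ s, gx s b * Gx c s e) * (P c * Q b - Q c * P b) = 0 := by
    intro P Q
    rw [← hsplitA]
    refine Eq.trans (Finset.sum_congr rfl fun c _ => Finset.sum_congr rfl fun b _ => by ring)
      (contract_sym (fun c b => dg c e b + ∑ s, gx s b * Gx c s e)
        (fun c b => P c * Q b) (fun c b => hA c e b))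
  linear_combination (-v0.2 e) * hz v1.1 v2.1 + (v1.2 e) * hz v0.1 v2.1
    + (-v2.2 e) * hz v0.1 v1.1

theorem claimB (gx : Fin n → Fin n → ℝ) (Gx dg : Fin n → Fin n → Fin n → ℝ)
    (dG ddg : Fin n → Fin n → Fin n → Fin n → ℝ) (X : Fin n → ℝ) (v0 v1 v2 : TE n)
    (hM : ∀ d a e b, ddg d a e b + ∑ s, (dg d s b * Gx a s e + gx s b * dG d a s e)
        = ddg d b e a + ∑ s, (dg d s a * Gx b s e + gx s a * dG d b s e))
    (hdd : ∀ d c e b, ddg d c e b = ddg c d e b) :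
    S2 Gx dg X v0 v1 v2 - S2 Gx dg X v1 v0 v2 + S2 Gx dg X v2 v0 v1
      + (S3 gx dG X v0 v1 v2 - S3 gx dG X v1 v0 v2 + S3 gx dG X v2 v0 v1) = 0 := by
  rw [cS2, cS2, cS2, cS3, cS3, cS3]
  simp only [← Finset.sum_sub_distrib, ← Finset.sum_add_distrib]
  refine Finset.sum_eq_zero fun e _ => ?_
  -- abbreviations
  set y0 := v0.1; set y1 := v1.1; set y2 := v2.1
  have h1 : (∑ d, ∑ c, ∑ b, y0 d * (∑ s, dg d s b * Gx c s e) * (y1 c * y2 b - y2 c * y1 b))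
      - (∑ d, ∑ c, ∑ b, y1 d * (∑ s, dg d s b * Gx c s e) * (y0 c * y2 b - y2 c * y0 b))
      + (∑ d, ∑ c, ∑ b, y2 d * (∑ s, dg d s b * Gx c s e) * (y0 c * y1 b - y1 c * y0 b))
      + ((∑ d, ∑ c, ∑ b, y0 d * (∑ s, gx s b * dG d c s e) * (y1 c * y2 b - y2 c * y1 b))
      - (∑ d, ∑ c, ∑ b, y1 d * (∑ s, gx s b * dG d c s e) * (y0 c * y2 b - y2 c * y0 b))
      + (∑ d, ∑ c, ∑ b, y2 d * (∑ s, gx s b * dG d c s e) * (y0 c * y1 b - y1 c * y0 b)))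
      = 0 := by
    have hmerge : (∑ d, ∑ c, ∑ b, y0 d * (∑ s, dg d s b * Gx c s e) * (y1 c * y2 b - y2 c * y1 b))
        - (∑ d, ∑ c, ∑ b, y1 d * (∑ s, dg d s b * Gx c s e) * (y0 c * y2 b - y2 c * y0 b))
        + (∑ d, ∑ c, ∑ b, y2 d * (∑ s, dg d s b * Gx c s e) * (y0 c * y1 b - y1 c * y0 b))
        + ((∑ d, ∑ c, ∑ b, y0 d * (∑ s, gx s b * dG d c s e) * (y1 c * y2 b - y2 c * y1 b))
        - (∑ d, ∑ c, ∑ b, y1 d * (∑ s, gx s b * dG d c s e) * (y0 c * y2 b - y2 c * y0 b))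
        + (∑ d, ∑ c, ∑ b, y2 d * (∑ s, gx s b * dG d c s e) * (y0 c * y1 b - y1 c * y0 b)))
        = (∑ d, ∑ c, ∑ b, (ddg d c e b + ∑ s, (dg d s b * Gx c s e + gx s b * dG d c s e)) *
              (y0 d * (y1 c * y2 b - y2 c * y1 b) - y1 d * (y0 c * y2 b - y2 c * y0 b)
                + y2 d * (y0 c * y1 b - y1 c * y0 b)))
          - (∑ d, ∑ c, ∑ b, ddg d c e b *
              (y0 d * (y1 c * y2 b - y2 c * y1 b) - y1 d * (y0 c * y2 b - y2 c * y0 b)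
                + y2 d * (y0 c * y1 b - y1 c * y0 b))) := by
      simp only [← Finset.sum_sub_distrib, ← Finset.sum_add_distrib]
      refine Finset.sum_congr rfl fun d _ => Finset.sum_congr rfl fun c _ =>
        Finset.sum_congr rfl fun b _ => ?_
      simp only [Finset.sum_add_distrib]
      ring
    rw [hmerge]
    have hz1 : (∑ d, ∑ c, ∑ b, (ddg d c e b + ∑ s, (dg d s b * Gx c s e + gx s b * dG d c s e)) *
        (y0 d * (y1 c * y2 b - y2 c * y1 b) - y1 d * (y0 c * y2 b - y2 c * y0 b)
          + y2 d * (y0 c * y1 b - y1 c * y0 b))) = 0 := by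
      refine Finset.sum_eq_zero fun d _ => ?_
      refine Eq.trans (Finset.sum_congr rfl fun c _ => Finset.sum_congr rfl fun b _ => by ring)
        (contract_sym (fun c b => ddg d c e b + ∑ s, (dg d s b * Gx c s e + gx s b * dG d c s e))
          (fun c b => y0 d * (y1 c * y2 b) - y1 d * (y0 c * y2 b) + y2 d * (y0 c * y1 b))
          (fun c b => hM d c e b))
    have hz2 : (∑ d, ∑ c, ∑ b, ddg d c e b *
        (y0 d * (y1 c * y2 b - y2 c * y1 b) - y1 d * (y0 c * y2 b - y2 c * y0 b)
          + y2 d * (y0 c * y1 b - y1 c * y0 b))) = 0 := by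
      rw [sc3 (fun d c b => ddg d c e b *
        (y0 d * (y1 c * y2 b - y2 c * y1 b) - y1 d * (y0 c * y2 b - y2 c * y0 b)
          + y2 d * (y0 c * y1 b - y1 c * y0 b)))]
      refine Finset.sum_eq_zero fun b _ => ?_
      refine Eq.trans (Finset.sum_congr rfl fun d _ => Finset.sum_congr rfl fun c _ => by ring)
        (contract_sym (fun d c => ddg d c e b)
          (fun d c => y0 d * (y1 c * y2 b) + y1 d * (y2 c * y0 b) + y2 d * (y0 c * y1 b))
          (fun d c => hdd d c e b))
    rw [hz1, hz2]; ring
  linear_combination (-(X e)) * h1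

theorem alg (gx : Fin n → Fin n → ℝ) (Gx dg : Fin n → Fin n → Fin n → ℝ)
    (dG ddg : Fin n → Fin n → Fin n → Fin n → ℝ) (X : Fin n → ℝ) (v0 v1 v2 : TE n)
    (hA : ∀ a e b, dg a e b + ∑ s, gx s b * Gx a s e = dg b e a + ∑ s, gx s a * Gx b s e)
    (hM : ∀ d a e b, ddg d a e b + ∑ s, (dg d s b * Gx a s e + gx s b * dG d a s e)
        = ddg d b e a + ∑ s, (dg d s a * Gx b s e + gx s a * dG d b s e))
    (hdd : ∀ d c e b, ddg d c e b = ddg c d e b) :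
    Dalg gx Gx dg dG X v0 v1 v2 - Dalg gx Gx dg dG X v1 v0 v2 + Dalg gx Gx dg dG X v2 v0 v1 = 0 := by
  rw [splitD, splitD, splitD]
  linear_combination claimA gx Gx dg v0 v1 v2 hA + claimB gx Gx dg dG ddg X v0 v1 v2 hM hdd

end

theorem fderivPiSum (f : Base n → ℝ) (x y : Base n) :
    fderiv ℝ f x y = ∑ d, y d * pdB f d x := by
  have h : y = ∑ d, y d • (Pi.single d 1 : Base n) := by
    ext j; simp [Pi.single_apply, eq_comm]
  conv_lhs => rw [h]
  rw [map_sum]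
  simp [pdB, smul_eq_mul]

theorem pdB_add {f h : Base n → ℝ} {x : Base n} (hf : DifferentiableAt ℝ f x)
    (hh : DifferentiableAt ℝ h x) (i : Fin n) :
    pdB (fun y => f y + h y) i x = pdB f i x + pdB h i x := by
  simp [pdB, fderiv_fun_add hf hh]

theorem pdB_mul {f h : Base n → ℝ} {x : Base n} (hf : DifferentiableAt ℝ f x)
    (hh : DifferentiableAt ℝ h x) (i : Fin n) :
    pdB (fun y => f y * h y) i x = pdB f i x * h x + f x * pdB h i x := by
  simp [pdB, fderiv_fun_mul hf hh]
  ring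

theorem pdB_sum {F : Fin n → Base n → ℝ} {x : Base n}
    (hF : ∀ s, DifferentiableAt ℝ (F s) x) (i : Fin n) :
    pdB (fun y => ∑ s, F s y) i x = ∑ s, pdB (F s) i x := by
  simp [pdB, fderiv_fun_sum (fun s _ => hF s)]

theorem pdB_comm {f : Base n → ℝ} (hf : ContDiff ℝ (⊤ : ℕ∞) f) (c d : Fin n) (x : Base n) :
    pdB (fun y => pdB f c y) d x = pdB (fun y => pdB f d y) c x := by
  have hdf : ContDiff ℝ (⊤ : ℕ∞) (fderiv ℝ f) := hf.fderiv_right (by simp)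
  have key : ∀ (i : Fin n) (u : Base n), pdB (fun y => fderiv ℝ f y u) i x
      = fderiv ℝ (fderiv ℝ f) x (Pi.single i 1) u := by
    intro i u
    rw [pdB, fderiv_clm_apply (hdf.differentiable (by simp)).differentiableAt
      (differentiableAt_const u)]
    simp
  rw [show (fun y => pdB f c y) = fun y => fderiv ℝ f y (Pi.single c 1) from rfl,
      show (fun y => pdB f d y) = fun y => fderiv ℝ f y (Pi.single d 1) from rfl,
      key d _, key c _]
  exact (hf.contDiffAt.isSymmSndFDerivAt (by rw [minSmoothness_of_isRCLikeNormedField]; exact WithTop.coe_le_coe.mpr le_top)).eq _ _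

variable {g : Base n → Fin n → Fin n → ℝ} {G : Base n → Fin n → Fin n → Fin n → ℝ}

theorem fderiv_Ups (hg : ∀ a b, ContDiff ℝ (⊤ : ℕ∞) (fun x => g x a b))
    (hG : ∀ a b d, ContDiff ℝ (⊤ : ℕ∞) (fun x => G x a b d))
    (w : Fin 2 → TE n) (p u : TE n) :
    fderiv ℝ (fun q => UpsG g (linK G) q w) p u =
    ∑ a, ∑ b,
      ((fderiv ℝ (fun x => g x a b) p.1 u.1) *
        (((w 0).2 a - ∑ c, linK G p c a * (w 0).1 c) * (w 1).1 b
         - ((w 1).2 a - ∑ c, linK G p c a * (w 1).1 c) * (w 0).1 b)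
      + g p.1 a b *
        ((- ∑ c, (∑ e, (fderiv ℝ (fun x => G x c a e) p.1 u.1 * p.2 e + G p.1 c a e * u.2 e)) * (w 0).1 c) * (w 1).1 b
         - (- ∑ c, (∑ e, (fderiv ℝ (fun x => G x c a e) p.1 u.1 * p.2 e + G p.1 c a e * u.2 e)) * (w 1).1 c) * (w 0).1 b)) := by
  have hGq : ∀ c a e, HasFDerivAt (fun q : TE n => G q.1 c a e)
      ((fderiv ℝ (fun x => G x c a e) p.1).comp (ContinuousLinearMap.fst ℝ (Fin n → ℝ) (Fin n → ℝ))) p :=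
    fun c a e => (((hG c a e).differentiable (by simp)).differentiableAt.hasFDerivAt).comp p hasFDerivAt_fst
  have hgq : ∀ a b, HasFDerivAt (fun q : TE n => g q.1 a b)
      ((fderiv ℝ (fun x => g x a b) p.1).comp (ContinuousLinearMap.fst ℝ (Fin n → ℝ) (Fin n → ℝ))) p :=
    fun a b => (((hg a b).differentiable (by simp)).differentiableAt.hasFDerivAt).comp p hasFDerivAt_fst
  have hx2 : ∀ e, HasFDerivAt (fun q : TE n => q.2 e)
      ((ContinuousLinearMap.proj e).comp (ContinuousLinearMap.snd ℝ (Fin n → ℝ) (Fin n → ℝ))) p :=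
    fun e => ((ContinuousLinearMap.proj (R := ℝ) (φ := fun _ : Fin n => ℝ) e).comp
      (ContinuousLinearMap.snd ℝ (Fin n → ℝ) (Fin n → ℝ))).hasFDerivAt
  have hK : ∀ c a, HasFDerivAt (fun q : TE n => linK G q c a)
      (∑ e, (G p.1 c a e • ((ContinuousLinearMap.proj e).comp (ContinuousLinearMap.snd ℝ (Fin n → ℝ) (Fin n → ℝ)))
        + p.2 e • ((fderiv ℝ (fun x => G x c a e) p.1).comp (ContinuousLinearMap.fst ℝ (Fin n → ℝ) (Fin n → ℝ))))) p :=
    fun c a => HasFDerivAt.fun_sum (fun e _ => (hGq c a e).mul (hx2 e))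
  have hE : ∀ (wv : TE n) (a : Fin n), HasFDerivAt
      (fun q : TE n => wv.2 a - ∑ c, linK G q c a * wv.1 c)
      ((0 : TE n →L[ℝ] ℝ) - ∑ c, wv.1 c •
        (∑ e, (G p.1 c a e • ((ContinuousLinearMap.proj e).comp (ContinuousLinearMap.snd ℝ (Fin n → ℝ) (Fin n → ℝ)))
          + p.2 e • ((fderiv ℝ (fun x => G x c a e) p.1).comp (ContinuousLinearMap.fst ℝ (Fin n → ℝ) (Fin n → ℝ)))))) p :=
    fun wv a => (hasFDerivAt_const (wv.2 a) p).sub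
      (HasFDerivAt.fun_sum (fun c _ => (hK c a).mul_const (wv.1 c)))
  have H : HasFDerivAt (fun q => UpsG g (linK G) q w) _ p :=
    HasFDerivAt.fun_sum (fun a _ => HasFDerivAt.fun_sum (fun b _ =>
      (hgq a b).mul (((hE (w 0) a).mul_const ((w 1).1 b)).sub ((hE (w 1) a).mul_const ((w 0).1 b)))))
  rw [H.fderiv]
  simp only [ContinuousLinearMap.add_apply, ContinuousLinearMap.sum_apply,
    ContinuousLinearMap.smul_apply, ContinuousLinearMap.comp_apply, ContinuousLinearMap.sub_apply,
    ContinuousLinearMap.coe_fst', ContinuousLinearMap.coe_snd', ContinuousLinearMap.proj_apply,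
    ContinuousLinearMap.zero_apply, smul_eq_mul]
  refine Finset.sum_congr rfl fun a _ => Finset.sum_congr rfl fun b _ => ?_
  have key : ∀ (wv : TE n),
      (-∑ c, (∑ e, (fderiv ℝ (fun x => G x c a e) p.1 u.1 * p.2 e + G p.1 c a e * u.2 e)) * wv.1 c)
      = (0 - ∑ x, wv.1 x * ∑ x_1, (G p.1 x a x_1 * u.2 x_1 + p.2 x_1 * (fderiv ℝ (fun y => G y x a x_1) p.1) u.1)) := by
    intro wv
    rw [zero_sub, neg_inj]
    refine Finset.sum_congr rfl fun c _ => ?_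
    rw [mul_comm]
    congr 1
    exact Finset.sum_congr rfl fun e _ => by ring
  rw [key, key]
  ring

theorem fderiv_Ups' (hg : ∀ a b, ContDiff ℝ (⊤ : ℕ∞) (fun x => g x a b))
    (hG : ∀ a b d, ContDiff ℝ (⊤ : ℕ∞) (fun x => G x a b d))
    (w : Fin 2 → TE n) (p u : TE n) :
    fderiv ℝ (fun q => UpsG g (linK G) q w) p u
      = Dalg (g p.1) (G p.1) (fun d a b => pdB (fun x => g x a b) d p.1)
          (fun d c a e => pdB (fun x => G x c a e) d p.1) p.2 u (w 0) (w 1) := by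
  rw [fderiv_Ups hg hG]
  simp only [Dalg, linK, fderivPiSum]

theorem extd_Ups (hg : ∀ a b, ContDiff ℝ (⊤ : ℕ∞) (fun x => g x a b))
    (hG : ∀ a b d, ContDiff ℝ (⊤ : ℕ∞) (fun x => G x a b d))
    (p : TE n) (v : Fin 3 → TE n) :
    extd (UpsG g (linK G)) p v
      = Dalg (g p.1) (G p.1) (fun d a b => pdB (fun x => g x a b) d p.1)
          (fun d c a e => pdB (fun x => G x c a e) d p.1) p.2 (v 0) (v 1) (v 2)
        - Dalg (g p.1) (G p.1) (fun d a b => pdB (fun x => g x a b) d p.1)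
            (fun d c a e => pdB (fun x => G x c a e) d p.1) p.2 (v 1) (v 0) (v 2)
        + Dalg (g p.1) (G p.1) (fun d a b => pdB (fun x => g x a b) d p.1)
            (fun d c a e => pdB (fun x => G x c a e) d p.1) p.2 (v 2) (v 0) (v 1) := by
  show ∑ i : Fin 3, (-1:ℝ)^(i:ℕ)
      * fderiv ℝ (fun q => UpsG g (linK G) q (v ∘ i.succAbove)) p (v i) = _
  rw [Fin.sum_univ_three,
    fderiv_Ups' hg hG (v ∘ (0:Fin 3).succAbove) p (v 0),
    fderiv_Ups' hg hG (v ∘ (1:Fin 3).succAbove) p (v 1),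
    fderiv_Ups' hg hG (v ∘ (2:Fin 3).succAbove) p (v 2)]
  have e00 : (v ∘ (0:Fin 3).succAbove) 0 = v 1 := rfl
  have e01 : (v ∘ (0:Fin 3).succAbove) 1 = v 2 := rfl
  have e10 : (v ∘ (1:Fin 3).succAbove) 0 = v 0 := rfl
  have e11 : (v ∘ (1:Fin 3).succAbove) 1 = v 2 := rfl
  have e20 : (v ∘ (2:Fin 3).succAbove) 0 = v 0 := rfl
  have e21 : (v ∘ (2:Fin 3).succAbove) 1 = v 1 := rfl
  rw [e00, e01, e10, e11, e20, e21,
    show ((0:Fin 3):ℕ) = 0 from rfl, show ((1:Fin 3):ℕ) = 1 from rfl,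
    show ((2:Fin 3):ℕ) = 2 from rfl]
  ring

end StmtAux

/-- For a linear connection `K` (Christoffel symbols `G_a^s{}_e(x)`)
on the tangent bundle of `E` and a pseudo-Riemannian metric `g`, the differential of
the 2-form `Υ[g,K] = g_{ab}(ḋ^a − K_c^a{}_e ẋ^e d^c) ∧ d^b` on `TE` vanishes if and
only if the `T*E`-valued 2-form `d_K g` with components
`∂_a g_{eb} + g_{sb} G_a^s{}_e`, antisymmetrized in `a, b`, vanishes. -/
theorem stmt5 (n : ℕ) (g : Base n → Fin n → Fin n → ℝ)
    (G : Base n → Fin n → Fin n → Fin n → ℝ)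
    (hg : ∀ a b, ContDiff ℝ (⊤ : ℕ∞) (fun x => g x a b))
    (hgsym : ∀ x a b, g x a b = g x b a)
    (hG : ∀ a b d, ContDiff ℝ (⊤ : ℕ∞) (fun x => G x a b d)) :
    (∀ p (v : Fin 3 → TE n), extd (UpsG g (linK G)) p v = 0)
    ↔ (∀ x e a b,
        pdB (fun y => g y e b) a x + ∑ s, g x s b * G x a s e
          = pdB (fun y => g y e a) b x + ∑ s, g x s a * G x b s e) := by
  constructor
  · intro h x e a b
    have h0 := h (x, 0) ![(0, Pi.single e 1), (Pi.single a 1, 0), (Pi.single b 1, 0)]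
    rw [extd_Ups hg hG] at h0
    simp [Dalg, Pi.single_apply, mul_ite, ite_mul, mul_sub, mul_neg, mul_zero, sub_zero,
      Finset.sum_sub_distrib, Finset.sum_add_distrib, Finset.sum_neg_distrib,
      Finset.sum_ite_eq, Finset.sum_ite_eq'] at h0
    linear_combination -h0
  · intro hsym p v
    rw [extd_Ups hg hG]
    have hdiffpd : ∀ (f : Base n → ℝ), ContDiff ℝ (⊤ : ℕ∞) f → ∀ (i : Fin n),
        Differentiable ℝ (fun y => pdB f i y) := by
      intro f hf i
      have hdf : ContDiff ℝ (⊤ : ℕ∞) (fderiv ℝ f) := hf.fderiv_right (by simp)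
      exact (hdf.clm_apply contDiff_const).differentiable (by simp)
    refine alg (g p.1) (G p.1) (fun d a b => pdB (fun x => g x a b) d p.1)
      (fun d c a e => pdB (fun x => G x c a e) d p.1)
      (fun d c e b => pdB (fun y => pdB (fun t => g t e b) c y) d p.1) p.2
      (v 0) (v 1) (v 2) (fun a e b => hsym p.1 e a b) ?_ (fun d c e b => pdB_comm (hg e b) c d p.1)
    intro d a e b
    have hLexp : ∀ (a e b : Fin n),
        pdB (fun y => pdB (fun t => g t e b) a y + ∑ s, g y s b * G y a s e) d p.1
        = pdB (fun y => pdB (fun t => g t e b) a y) d p.1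
          + ∑ s, (pdB (fun t => g t s b) d p.1 * G p.1 a s e
              + g p.1 s b * pdB (fun t => G t a s e) d p.1) := by
      intro a e b
      rw [pdB_add ((hdiffpd _ (hg e b) a) p.1)
        (DifferentiableAt.fun_sum fun s _ =>
          (((hg s b).differentiable (by simp)) p.1).fun_mul (((hG a s e).differentiable (by simp)) p.1)),
        pdB_sum (fun s => (((hg s b).differentiable (by simp)) p.1).fun_mul
          (((hG a s e).differentiable (by simp)) p.1))]
      congr 1
      exact Finset.sum_congr rfl fun s _ =>
        pdB_mul (((hg s b).differentiable (by simp)) p.1) (((hG a s e).differentiable (by simp)) p.1) d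
    have hfe : (fun y => pdB (fun t => g t e b) a y + ∑ s, g y s b * G y a s e)
        = (fun y => pdB (fun t => g t e a) b y + ∑ s, g y s a * G y b s e) :=
      funext fun y => hsym y e a b
    have h2 := congrArg (fun f => pdB f d p.1) hfe
    rw [hLexp a e b, hLexp b e a] at h2
    exact h2
end

section
/- For a connection K on TE → E and a pseudo-Riemannian metric g, the Schouten–Nijenhuis bracket of the 2-vector Λ[g,K] = g^{λμ}(∂_λ + K_λ^ν ∂̇_ν) ∧ ∂̇_μ with itself equals 2 g^{ρν}(∂_ρ g^{λμ} − g^{σλ} ∂̇_σ K_ρ^μ)(∂_λ + K_λ^κ ∂̇_κ) ∧ ∂̇_μ ∧ ∂̇_ν + R[K]^{κμν} ∂̇_κ ∧ ∂̇_μ ∧ ∂̇_ν, where R[K]^{λμν} = g^{λρ} g^{μσ} R[K]_{ρσ}^ν. -/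
open scoped BigOperators

/-- Index set for the coordinates `(x^a, ẋ^a)` of `TE`. -/
abbrev Idx (n : ℕ) := Fin n ⊕ Fin n

/-- Coordinate derivative on `TE` in the direction labelled by `A : Idx n`
(`∂_a` for `inl a`, `∂̇_a` for `inr a`). -/
noncomputable def DT {n : ℕ} (A : Idx n) (f : TE n → ℝ) (p : TE n) : ℝ :=
  match A with
  | .inl a => pdT f a p
  | .inr a => vdT f a p

/-- Components of the horizontal vector field `∂_a + K_a^c ∂̇_c` on `TE`. -/
def Xcomp {n : ℕ} (K : TE n → Fin n → Fin n → ℝ) (p : TE n) (a : Fin n) :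
    Idx n → ℝ :=
  fun A => match A with
  | .inl c => if c = a then 1 else 0
  | .inr c => K p a c

/-- Components of the vertical vector field `∂̇_b` on `TE`. -/
def Ycomp {n : ℕ} (b : Fin n) : Idx n → ℝ :=
  fun A => match A with
  | .inl _ => 0
  | .inr c => if c = b then 1 else 0

/-- Components of the 2-vector `Λ[g,K] = g^{ab}(∂_a + K_a^c ∂̇_c) ∧ ∂̇_b` on `TE`. -/
noncomputable def Lam {n : ℕ} (ginv : Base n → Fin n → Fin n → ℝ)
    (K : TE n → Fin n → Fin n → ℝ) (p : TE n) (A B : Idx n) : ℝ :=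
  ∑ a, ∑ b, ginv p.1 a b * (Xcomp K p a A * Ycomp b B - Xcomp K p a B * Ycomp b A)

/-- Components of the Schouten–Nijenhuis bracket `[L,L]` of a 2-vector `L` on `TE`:
`[L,L]^{ABC} = 2 Σ_D (L^{DA} ∂_D L^{BC} + L^{DB} ∂_D L^{CA} + L^{DC} ∂_D L^{AB})`. -/
noncomputable def SB {n : ℕ} (L : TE n → Idx n → Idx n → ℝ)
    (p : TE n) (A B C : Idx n) : ℝ :=
  2 * ∑ D : Idx n,
    (L p D A * DT D (fun q => L q B C) p
      + L p D B * DT D (fun q => L q C A) p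
      + L p D C * DT D (fun q => L q A B) p)

/-- The raised curvature components `R[K]^{abe} = g^{ac} g^{bs} R[K]_{cs}^e`. -/
noncomputable def Rup {n : ℕ} (ginv : Base n → Fin n → Fin n → ℝ)
    (K : TE n → Fin n → Fin n → ℝ) (p : TE n) (a b e : Fin n) : ℝ :=
  ∑ c, ∑ s, ginv p.1 a c * ginv p.1 b s * RawR K p c s e

section Infra
open Finset

variable {n : ℕ}

/-- Direction vector attached to an index. -/
def dirV (n : ℕ) (A : Idx n) : TE n :=
  match A with
  | .inl a => (Pi.single a 1, 0)
  | .inr a => (0, Pi.single a 1)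

lemma DT_eq_fderiv (A : Idx n) (f : TE n → ℝ) (p : TE n) :
    DT A f p = fderiv ℝ f p (dirV n A) := by
  cases A <;> rfl

lemma DT_sub {p : TE n} (A : Idx n) {f g : TE n → ℝ}
    (hf : DifferentiableAt ℝ f p) (hg : DifferentiableAt ℝ g p) :
    DT A (fun q => f q - g q) p = DT A f p - DT A g p := by
  simp [DT_eq_fderiv, fderiv_fun_sub hf hg]

lemma DT_mul {p : TE n} (A : Idx n) {f g : TE n → ℝ}
    (hf : DifferentiableAt ℝ f p) (hg : DifferentiableAt ℝ g p) :
    DT A (fun q => f q * g q) p = DT A f p * g p + f p * DT A g p := by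
  simp [DT_eq_fderiv, fderiv_fun_mul hf hg]; ring

lemma DT_sum {p : TE n} (A : Idx n) {ι : Type*} (u : Finset ι) {f : ι → TE n → ℝ}
    (hf : ∀ i ∈ u, DifferentiableAt ℝ (f i) p) :
    DT A (fun q => ∑ i ∈ u, f i q) p = ∑ i ∈ u, DT A (f i) p := by
  simp [DT_eq_fderiv, fderiv_fun_sum hf]

lemma pdT_base {p : TE n} {f : Base n → ℝ} (hf : DifferentiableAt ℝ f p.1) (i : Fin n) :
    pdT (fun q : TE n => f q.1) i p = pdB f i p.1 := by
  have h : (fun q : TE n => f q.1) = f ∘ Prod.fst := rfl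
  rw [pdT, pdB, h, fderiv_comp p hf differentiableAt_fst, fderiv_fst]
  rfl

lemma vdT_base {p : TE n} {f : Base n → ℝ} (hf : DifferentiableAt ℝ f p.1) (i : Fin n) :
    vdT (fun q : TE n => f q.1) i p = 0 := by
  have h : (fun q : TE n => f q.1) = f ∘ Prod.fst := rfl
  rw [vdT, h, fderiv_comp p hf differentiableAt_fst, fderiv_fst]
  simp

end Infra
section Infra2
open Finset

variable {n : ℕ} (ginv : Base n → Fin n → Fin n → ℝ) (K : TE n → Fin n → Fin n → ℝ)

lemma Lam_ll (q : TE n) (x y : Fin n) :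
    Lam ginv K q (Sum.inl x) (Sum.inl y) = 0 := by
  simp [Lam, Xcomp, Ycomp]

lemma Lam_lr (q : TE n) (x y : Fin n) :
    Lam ginv K q (Sum.inl x) (Sum.inr y) = ginv q.1 x y := by
  simp [Lam, Xcomp, Ycomp, ite_mul, mul_ite, Finset.sum_ite_eq, Finset.sum_ite_eq']

lemma Lam_rl (q : TE n) (x y : Fin n) :
    Lam ginv K q (Sum.inr x) (Sum.inl y) = -(ginv q.1 y x) := by
  simp [Lam, Xcomp, Ycomp, ite_mul, mul_ite, Finset.sum_ite_eq, Finset.sum_ite_eq']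

lemma Lam_rr (q : TE n) (x y : Fin n) :
    Lam ginv K q (Sum.inr x) (Sum.inr y)
      = ∑ a, (ginv q.1 a y * K q a x - ginv q.1 a x * K q a y) := by
  simp [Lam, Xcomp, Ycomp, mul_ite, ite_mul, mul_sub, Finset.sum_sub_distrib, Finset.sum_ite_eq]

end Infra2
section Infra3
open Finset

variable {n : ℕ}

lemma DT_inl (a : Fin n) (f : TE n → ℝ) (p : TE n) : DT (Sum.inl a) f p = pdT f a p := rfl
lemma DT_inr (a : Fin n) (f : TE n → ℝ) (p : TE n) : DT (Sum.inr a) f p = vdT f a p := rfl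

lemma ginv_symm (g ginv : Base n → Fin n → Fin n → ℝ)
    (hgsym : ∀ x a b, g x a b = g x b a)
    (hinv' : ∀ x a b, ∑ c, g x a c * ginv x c b = if a = b then (1:ℝ) else 0)
    (x : Base n) (a b : Fin n) : ginv x a b = ginv x b a := by
  have h1 : ∑ c, ∑ d, ginv x c a * (g x c d * ginv x d b) = ginv x b a := by
    calc ∑ c, ∑ d, ginv x c a * (g x c d * ginv x d b)
        = ∑ c, ginv x c a * ∑ d, g x c d * ginv x d b := by
          simp [Finset.mul_sum]
      _ = ∑ c, ginv x c a * (if c = b then (1:ℝ) else 0) := by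
          simp only [hinv']
      _ = ginv x b a := by simp [mul_ite, Finset.sum_ite_eq']
  have h2 : ∑ c, ∑ d, ginv x c a * (g x c d * ginv x d b) = ginv x a b := by
    calc ∑ c, ∑ d, ginv x c a * (g x c d * ginv x d b)
        = ∑ d, ∑ c, ginv x d b * (g x d c * ginv x c a) := by
          rw [Finset.sum_comm]
          exact Finset.sum_congr rfl fun d _ => Finset.sum_congr rfl fun c _ => by
            rw [hgsym x c d]; ring
      _ = ∑ d, ginv x d b * ∑ c, g x d c * ginv x c a := by
          simp [Finset.mul_sum]
      _ = ∑ d, ginv x d b * (if d = a then (1:ℝ) else 0) := by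
          simp only [hinv']
      _ = ginv x a b := by simp [mul_ite, Finset.sum_ite_eq']
  rw [← h1, h2]

variable {ginv : Base n → Fin n → Fin n → ℝ} {K : TE n → Fin n → Fin n → ℝ}

lemma diff_ginv (hginv : ∀ a b, ContDiff ℝ (⊤ : ℕ∞) (fun x => ginv x a b)) (p : TE n) (a b : Fin n) :
    DifferentiableAt ℝ (fun q : TE n => ginv q.1 a b) p :=
  (((hginv a b).differentiable (by simp)).comp differentiable_fst).differentiableAt

lemma diff_K (hK : ∀ a b, ContDiff ℝ (⊤ : ℕ∞) (fun p => K p a b)) (p : TE n) (a b : Fin n) :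
    DifferentiableAt ℝ (fun q : TE n => K q a b) p :=
  ((hK a b).differentiable (by simp)).differentiableAt

/-- Derivative of the (l,r) component of `Λ`. -/
lemma DT_Lam_lr (hginv : ∀ a b, ContDiff ℝ (⊤ : ℕ∞) (fun x => ginv x a b))
    (A : Idx n) (p : TE n) (x y : Fin n) :
    DT A (fun q => ginv q.1 x y) p
      = match A with
        | .inl d => pdB (fun t => ginv t x y) d p.1
        | .inr _ => 0 := by
  cases A with
  | inl d => exact pdT_base (((hginv x y).differentiable (by simp)) p.1) d
  | inr d => exact vdT_base (((hginv x y).differentiable (by simp)) p.1) d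

/-- Derivative of the (r,r) component of `Λ`. -/
lemma DT_Lam_rr (hginv : ∀ a b, ContDiff ℝ (⊤ : ℕ∞) (fun x => ginv x a b))
    (hK : ∀ a b, ContDiff ℝ (⊤ : ℕ∞) (fun p => K p a b))
    (A : Idx n) (p : TE n) (x y : Fin n) :
    DT A (fun q => ∑ a, (ginv q.1 a y * K q a x - ginv q.1 a x * K q a y)) p
      = match A with
        | .inl d => ∑ a, (pdB (fun t => ginv t a y) d p.1 * K p a x
            + ginv p.1 a y * pdT (fun q => K q a x) d p
            - (pdB (fun t => ginv t a x) d p.1 * K p a y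
            + ginv p.1 a x * pdT (fun q => K q a y) d p))
        | .inr d => ∑ a, (ginv p.1 a y * vdT (fun q => K q a x) d p
            - ginv p.1 a x * vdT (fun q => K q a y) d p) := by
  have hstep : DT A (fun q => ∑ a, (ginv q.1 a y * K q a x - ginv q.1 a x * K q a y)) p
      = ∑ a, (DT A (fun q => ginv q.1 a y) p * K p a x
          + ginv p.1 a y * DT A (fun q => K q a x) p
          - (DT A (fun q => ginv q.1 a x) p * K p a y
          + ginv p.1 a x * DT A (fun q => K q a y) p)) := by
    rw [DT_sum A Finset.univ (f := fun a q => ginv q.1 a y * K q a x - ginv q.1 a x * K q a y) (fun a _ => DifferentiableAt.sub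
      ((diff_ginv hginv p a y).mul (diff_K hK p a x))
      ((diff_ginv hginv p a x).mul (diff_K hK p a y)))]
    exact Finset.sum_congr rfl fun a _ => by
      rw [DT_sub A (f := fun q => ginv q.1 a y * K q a x) (g := fun q => ginv q.1 a x * K q a y) ((diff_ginv hginv p a y).mul (diff_K hK p a x))
        ((diff_ginv hginv p a x).mul (diff_K hK p a y)),
        DT_mul A (diff_ginv hginv p a y) (diff_K hK p a x),
        DT_mul A (diff_ginv hginv p a x) (diff_K hK p a y)]
  rw [hstep]
  cases A with
  | inl d =>
    exact Finset.sum_congr rfl fun a _ => by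
      simp only [DT_inl]; rw [
        pdT_base (((hginv a y).differentiable (by simp)) p.1) d,
        pdT_base (((hginv a x).differentiable (by simp)) p.1) d]
  | inr d =>
    exact Finset.sum_congr rfl fun a _ => by
      simp only [DT_inr]; rw [
        vdT_base (((hginv a y).differentiable (by simp)) p.1) d,
        vdT_base (((hginv a x).differentiable (by simp)) p.1) d]
      ring

end Infra3
section Infra4
open Finset

variable {n : ℕ}

lemma DT_zero (A : Idx n) (p : TE n) : DT A (fun _ => (0:ℝ)) p = 0 := by
  simp [DT_eq_fderiv]

lemma Xcomp_l {n : ℕ} (K : TE n → Fin n → Fin n → ℝ) (p : TE n) (a c : Fin n) :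
    Xcomp K p a (Sum.inl c) = if c = a then (1:ℝ) else 0 := rfl
lemma Xcomp_r {n : ℕ} (K : TE n → Fin n → Fin n → ℝ) (p : TE n) (a c : Fin n) :
    Xcomp K p a (Sum.inr c) = K p a c := rfl
lemma Ycomp_l {n : ℕ} (b c : Fin n) : Ycomp b (Sum.inl c) = 0 := rfl
lemma Ycomp_r {n : ℕ} (b c : Fin n) : Ycomp b (Sum.inr c) = if c = b then (1:ℝ) else 0 := rfl

lemma DT_neg (A : Idx n) (f : TE n → ℝ) (p : TE n) :
    DT A (fun q => -(f q)) p = -(DT A f p) := by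
  simp [DT_eq_fderiv, fderiv_neg]

variable {ginv : Base n → Fin n → Fin n → ℝ} {K : TE n → Fin n → Fin n → ℝ}

lemma DT_lr_l (hginv : ∀ a b, ContDiff ℝ (⊤ : ℕ∞) (fun x => ginv x a b)) (d : Fin n)
    (p : TE n) (x y : Fin n) :
    DT (Sum.inl d) (fun q => ginv q.1 x y) p = pdB (fun t => ginv t x y) d p.1 :=
  DT_Lam_lr hginv (Sum.inl d) p x y

lemma DT_lr_r (hginv : ∀ a b, ContDiff ℝ (⊤ : ℕ∞) (fun x => ginv x a b)) (d : Fin n)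
    (p : TE n) (x y : Fin n) :
    DT (Sum.inr d) (fun q => ginv q.1 x y) p = 0 :=
  DT_Lam_lr hginv (Sum.inr d) p x y

lemma DT_rr_l (hginv : ∀ a b, ContDiff ℝ (⊤ : ℕ∞) (fun x => ginv x a b))
    (hK : ∀ a b, ContDiff ℝ (⊤ : ℕ∞) (fun p => K p a b)) (d : Fin n) (p : TE n) (x y : Fin n) :
    DT (Sum.inl d) (fun q => ∑ a, (ginv q.1 a y * K q a x - ginv q.1 a x * K q a y)) p
      = ∑ a, (pdB (fun t => ginv t a y) d p.1 * K p a x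
          + ginv p.1 a y * pdT (fun q => K q a x) d p
          - (pdB (fun t => ginv t a x) d p.1 * K p a y
          + ginv p.1 a x * pdT (fun q => K q a y) d p)) :=
  DT_Lam_rr hginv hK (Sum.inl d) p x y

lemma DT_rr_r (hginv : ∀ a b, ContDiff ℝ (⊤ : ℕ∞) (fun x => ginv x a b))
    (hK : ∀ a b, ContDiff ℝ (⊤ : ℕ∞) (fun p => K p a b)) (d : Fin n) (p : TE n) (x y : Fin n) :
    DT (Sum.inr d) (fun q => ∑ a, (ginv q.1 a y * K q a x - ginv q.1 a x * K q a y)) p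
      = ∑ a, (ginv p.1 a y * vdT (fun q => K q a x) d p
          - ginv p.1 a x * vdT (fun q => K q a y) d p) :=
  DT_Lam_rr hginv hK (Sum.inr d) p x y

/-- The right-hand side of Statement 7 as a function. -/
noncomputable def Rhs (ginv : Base n → Fin n → Fin n → ℝ) (K : TE n → Fin n → Fin n → ℝ)
    (p : TE n) (A B C : Idx n) : ℝ :=
  (∑ a, ∑ b, ∑ c,
      (2 * ∑ e, ginv p.1 e c *
        (pdB (fun y => ginv y a b) e p.1
          - ∑ s, ginv p.1 s a * vdT (fun q => K q e b) s p)) *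
      Matrix.det !![Xcomp K p a A, Xcomp K p a B, Xcomp K p a C;
                    Ycomp b A, Ycomp b B, Ycomp b C;
                    Ycomp c A, Ycomp c B, Ycomp c C])
    + ∑ k, ∑ b, ∑ c, Rup ginv K p k b c *
      Matrix.det !![Ycomp k A, Ycomp k B, Ycomp k C;
                    Ycomp b A, Ycomp b B, Ycomp b C;
                    Ycomp c A, Ycomp c B, Ycomp c C]

lemma SB_cyc (L : TE n → Idx n → Idx n → ℝ) (p : TE n) (A B C : Idx n) :
    SB L p A B C = SB L p B C A := by
  simp only [SB]
  congr 1
  exact Finset.sum_congr rfl fun D _ => by ring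

lemma Rhs_cyc (p : TE n) (A B C : Idx n) :
    Rhs ginv K p A B C = Rhs ginv K p B C A := by
  simp only [Rhs, Matrix.det_fin_three]
  congr 1
  · exact Finset.sum_congr rfl fun a _ => Finset.sum_congr rfl fun b _ =>
      Finset.sum_congr rfl fun c _ => by
        simp only [Matrix.of_apply, Matrix.cons_val', Matrix.cons_val_zero, Matrix.cons_val_one,
          Matrix.head_cons, Matrix.empty_val', Matrix.cons_val_fin_one,
          Matrix.head_fin_const, Matrix.cons_val_two, Matrix.tail_cons]; ring
  · exact Finset.sum_congr rfl fun a _ => Finset.sum_congr rfl fun b _ =>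
      Finset.sum_congr rfl fun c _ => by
        simp only [Matrix.of_apply, Matrix.cons_val', Matrix.cons_val_zero, Matrix.cons_val_one,
          Matrix.head_cons, Matrix.empty_val', Matrix.cons_val_fin_one,
          Matrix.head_fin_const, Matrix.cons_val_two, Matrix.tail_cons]; ring

end Infra4
section Coll
open Finset
variable {n : ℕ}

lemma collapse1 (co : Fin n → Fin n → Fin n → ℝ) (U V W : Fin n → ℝ) (x y z : Fin n) :
    (∑ a, ∑ b, ∑ c, co a b c * Matrix.det !![U a, V a, W a;
        (if x = b then (1:ℝ) else 0), (if y = b then (1:ℝ) else 0), (if z = b then (1:ℝ) else 0);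
        (if x = c then (1:ℝ) else 0), (if y = c then (1:ℝ) else 0), (if z = c then (1:ℝ) else 0)])
    = ∑ a, (U a * (co a y z - co a z y) + V a * (co a z x - co a x z)
        + W a * (co a x y - co a y x)) := by
  refine Finset.sum_congr rfl fun a _ => ?_
  simp only [Matrix.det_fin_three, Matrix.of_apply, Matrix.cons_val', Matrix.cons_val_zero,
    Matrix.cons_val_one, Matrix.head_cons, Matrix.empty_val', Matrix.cons_val_fin_one,
    Matrix.head_fin_const, Matrix.cons_val_two, Matrix.tail_cons]
  simp only [mul_ite, ite_mul, mul_one, one_mul, mul_zero, zero_mul, sub_zero, zero_sub,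
    add_zero, zero_add, neg_zero, mul_neg, neg_mul, neg_neg, mul_sub, mul_add, ite_self,
    Finset.sum_ite_eq, Finset.sum_ite_eq', Finset.mem_univ, if_true,
    Finset.sum_const_zero, Finset.sum_sub_distrib, Finset.sum_neg_distrib,
    Finset.sum_add_distrib]
  ring

lemma collapse2 (co : Fin n → Fin n → Fin n → ℝ) (x y z : Fin n) :
    (∑ a, ∑ b, ∑ c, co a b c * Matrix.det !![
        (if x = a then (1:ℝ) else 0), (if y = a then (1:ℝ) else 0), (if z = a then (1:ℝ) else 0);
        (if x = b then (1:ℝ) else 0), (if y = b then (1:ℝ) else 0), (if z = b then (1:ℝ) else 0);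
        (if x = c then (1:ℝ) else 0), (if y = c then (1:ℝ) else 0), (if z = c then (1:ℝ) else 0)])
    = co x y z - co x z y + (co y z x - co y x z) + (co z x y - co z y x) := by
  rw [collapse1 co _ _ _ x y z]
  simp only [ite_mul, one_mul, zero_mul, Finset.sum_ite_eq, Finset.mem_univ, if_true,
    Finset.sum_add_distrib]

end Coll
section Cases
open Finset

variable {n : ℕ} {ginv : Base n → Fin n → Fin n → ℝ} {K : TE n → Fin n → Fin n → ℝ}

lemma caseLLL (hginv : ∀ a b, ContDiff ℝ (⊤ : ℕ∞) (fun x => ginv x a b))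
    (hK : ∀ a b, ContDiff ℝ (⊤ : ℕ∞) (fun p => K p a b)) (p : TE n) (x y z : Fin n) :
    SB (Lam ginv K) p (Sum.inl x) (Sum.inl y) (Sum.inl z)
      = Rhs ginv K p (Sum.inl x) (Sum.inl y) (Sum.inl z) := by
  simp [SB, Fintype.sum_sum_type, Lam_ll, Lam_rl, Lam_lr, DT_zero, DT_neg,
    DT_lr_l hginv, DT_lr_r hginv, Rhs, Matrix.det_fin_three, Ycomp_l]

lemma caseLLR (hginv : ∀ a b, ContDiff ℝ (⊤ : ℕ∞) (fun x => ginv x a b))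
    (hK : ∀ a b, ContDiff ℝ (⊤ : ℕ∞) (fun p => K p a b)) (p : TE n) (x y z : Fin n) :
    SB (Lam ginv K) p (Sum.inl x) (Sum.inl y) (Sum.inr z)
      = Rhs ginv K p (Sum.inl x) (Sum.inl y) (Sum.inr z) := by
  simp [SB, Fintype.sum_sum_type, Lam_ll, Lam_rl, Lam_lr, DT_zero, DT_neg,
    DT_lr_l hginv, DT_lr_r hginv, Rhs, Matrix.det_fin_three, Ycomp_l, Ycomp_r, Matrix.of_apply, Matrix.cons_val',
    Matrix.cons_val_zero, Matrix.cons_val_one, Matrix.head_cons, Matrix.empty_val',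
    Matrix.cons_val_fin_one, Matrix.head_fin_const, Matrix.cons_val_two, Matrix.tail_cons,
    Matrix.vecHead, Matrix.vecTail]

lemma caseLRR (hginv : ∀ a b, ContDiff ℝ (⊤ : ℕ∞) (fun x => ginv x a b))
    (hK : ∀ a b, ContDiff ℝ (⊤ : ℕ∞) (fun p => K p a b))
    (hsym : ∀ x a b, ginv x a b = ginv x b a) (p : TE n) (x y z : Fin n) :
    SB (Lam ginv K) p (Sum.inl x) (Sum.inr y) (Sum.inr z)
      = Rhs ginv K p (Sum.inl x) (Sum.inr y) (Sum.inr z) := by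
  simp only [SB, Fintype.sum_sum_type, Lam_ll, Lam_rl, Lam_lr, Lam_rr, DT_zero, DT_neg,
    DT_lr_l hginv, DT_lr_r hginv, DT_rr_l hginv hK, DT_rr_r hginv hK,
    mul_zero, zero_mul, add_zero, zero_add, mul_neg, neg_mul, neg_zero, neg_neg]
  simp only [Rhs, Matrix.det_fin_three, Matrix.of_apply, Matrix.cons_val',
    Matrix.cons_val_zero, Matrix.cons_val_one, Matrix.head_cons, Matrix.empty_val',
    Matrix.cons_val_fin_one, Matrix.head_fin_const, Matrix.cons_val_two, Matrix.tail_cons,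
    Xcomp_l, Xcomp_r, Ycomp_l, Ycomp_r, mul_ite, ite_mul, mul_one, one_mul, mul_zero,
    zero_mul, sub_zero, zero_sub, add_zero, zero_add, neg_zero, mul_neg, neg_mul, neg_neg,
    Finset.sum_ite_eq, Finset.sum_ite_eq', Finset.mem_univ, if_true, mul_sub, mul_add,
    ite_self, Finset.sum_const_zero, Finset.sum_sub_distrib, Finset.sum_neg_distrib]
  have e1 : (∑ d, ginv p.1 d z * ∑ s, ginv p.1 s x * vdT (fun q => K q d y) s p)
      = ∑ d, ginv p.1 x d * ∑ a, ginv p.1 a z * vdT (fun q => K q a y) d p := by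
    simp only [Finset.mul_sum]
    rw [Finset.sum_comm]
    exact Finset.sum_congr rfl fun d _ => Finset.sum_congr rfl fun a _ => by
      rw [hsym p.1 x d]; ring
  have e2 : (∑ d, ginv p.1 d y * ∑ s, ginv p.1 s x * vdT (fun q => K q d z) s p)
      = ∑ d, ginv p.1 x d * ∑ a, ginv p.1 a y * vdT (fun q => K q a z) d p := by
    simp only [Finset.mul_sum]
    rw [Finset.sum_comm]
    exact Finset.sum_congr rfl fun d _ => Finset.sum_congr rfl fun a _ => by
      rw [hsym p.1 x d]; ring
  rw [e1, e2, Finset.sum_add_distrib, Finset.sum_neg_distrib]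
  ring

lemma caseRRR (hginv : ∀ a b, ContDiff ℝ (⊤ : ℕ∞) (fun x => ginv x a b))
    (hK : ∀ a b, ContDiff ℝ (⊤ : ℕ∞) (fun p => K p a b))
    (hsym : ∀ x a b, ginv x a b = ginv x b a) (p : TE n) (x y z : Fin n) :
    SB (Lam ginv K) p (Sum.inr x) (Sum.inr y) (Sum.inr z)
      = Rhs ginv K p (Sum.inr x) (Sum.inr y) (Sum.inr z) := by
  simp only [SB, Fintype.sum_sum_type, Lam_ll, Lam_rl, Lam_lr, Lam_rr, DT_zero, DT_neg,
    DT_lr_l hginv, DT_lr_r hginv, DT_rr_l hginv hK, DT_rr_r hginv hK,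
    mul_zero, zero_mul, add_zero, zero_add, mul_neg, neg_mul, neg_zero, neg_neg]
  simp only [Rhs, Xcomp_r, Ycomp_r]
  rw [collapse1, collapse2]
  simp only [Rup, RawR]
  simp only [Finset.mul_sum, Finset.sum_mul, mul_sub, sub_mul, mul_add, add_mul,
    Finset.sum_sub_distrib, Finset.sum_add_distrib, Finset.sum_neg_distrib,
    mul_neg, neg_mul, neg_neg, neg_add, neg_sub]
  have swap13 : ∀ f : Fin n → Fin n → Fin n → ℝ,
      (∑ a, ∑ b, ∑ c, f a b c) = ∑ c, ∑ b, ∑ a, f a b c := by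
    intro f
    calc (∑ a, ∑ b, ∑ c, f a b c) = ∑ b, ∑ a, ∑ c, f a b c := Finset.sum_comm
      _ = ∑ b, ∑ c, ∑ a, f a b c := Finset.sum_congr rfl fun b _ => Finset.sum_comm
      _ = ∑ c, ∑ b, ∑ a, f a b c := Finset.sum_comm
  have hE : ∀ al be ga : Fin n,
      (∑ a, ∑ i, K p a al * (2 * (ginv p.1 i be * pdB (fun t => ginv t a ga) i p.1)))
      = ∑ d, ∑ i, 2 * (ginv p.1 d be * (pdB (fun t => ginv t i ga) d p.1 * K p i al)) := by
    intro al be ga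
    rw [Finset.sum_comm]
    exact Finset.sum_congr rfl fun d _ => Finset.sum_congr rfl fun a _ => by ring
  have hF : ∀ al be ga : Fin n,
      (∑ a, ∑ b, ∑ i, K p a al * (2 * (ginv p.1 b be * (ginv p.1 i a * vdT (fun q => K q b ga) i p))))
      = ∑ d, ∑ b, ∑ i, 2 * (ginv p.1 i d * K p i al * (ginv p.1 b be * vdT (fun q => K q b ga) d p)) := by
    intro al be ga
    rw [swap13]
    refine Finset.sum_congr rfl fun d _ => Finset.sum_congr rfl fun b _ =>
      Finset.sum_congr rfl fun a _ => ?_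
    rw [hsym p.1 d a]; ring
  have hH : ∀ al be ga : Fin n,
      (∑ d, ∑ b, ginv p.1 al d * ginv p.1 be b * (2 * pdT (fun q => K q b ga) d p))
      = ∑ d, ∑ i, 2 * (ginv p.1 d al * (ginv p.1 i be * pdT (fun q => K q i ga) d p)) := by
    intro al be ga
    refine Finset.sum_congr rfl fun d _ => Finset.sum_congr rfl fun b _ => ?_
    rw [hsym p.1 al d, hsym p.1 be b]; ring
  have hI : ∀ al be ga : Fin n,
      (∑ d, ∑ b, ∑ i, ginv p.1 al d * ginv p.1 be b * (2 * (K p d i * vdT (fun q => K q b ga) i p)))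
      = ∑ d, ∑ b, ∑ i, 2 * (ginv p.1 i al * K p i d * (ginv p.1 b be * vdT (fun q => K q b ga) d p)) := by
    intro al be ga
    rw [swap13]
    refine Finset.sum_congr rfl fun d _ => Finset.sum_congr rfl fun b _ =>
      Finset.sum_congr rfl fun a _ => ?_
    rw [hsym p.1 al a, hsym p.1 be b]; ring
  simp only [hE, hF, hH, hI]
  ring


end Cases
/-- For a connection `K` on `TE → E` and a pseudo-Riemannian metric
`g` (inverse `g^{ab}`), the Schouten–Nijenhuis bracket of the 2-vector
`Λ[g,K] = g^{ab}(∂_a + K_a^c ∂̇_c) ∧ ∂̇_b` with itself equals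
`2 g^{ec}(∂_e g^{ab} − g^{sa} ∂̇_s K_e^b)(∂_a + K_a^k ∂̇_k) ∧ ∂̇_b ∧ ∂̇_c
 + R[K]^{kbc} ∂̇_k ∧ ∂̇_b ∧ ∂̇_c`, where `R[K]^{abe} = g^{ac} g^{bs} R[K]_{cs}^e`. -/
theorem stmt7 (n : ℕ) (g ginv : Base n → Fin n → Fin n → ℝ)
    (K : TE n → Fin n → Fin n → ℝ)
    (hg : ∀ a b, ContDiff ℝ (⊤ : ℕ∞) (fun x => g x a b))
    (hginv : ∀ a b, ContDiff ℝ (⊤ : ℕ∞) (fun x => ginv x a b))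
    (hgsym : ∀ x a b, g x a b = g x b a)
    (hinv : ∀ x a b, ∑ c, ginv x a c * g x c b = if a = b then (1:ℝ) else 0)
    (hinv' : ∀ x a b, ∑ c, g x a c * ginv x c b = if a = b then (1:ℝ) else 0)
    (hK : ∀ a b, ContDiff ℝ (⊤ : ℕ∞) (fun p => K p a b)) :
    ∀ p (A B C : Idx n),
      SB (Lam ginv K) p A B C
        = (∑ a, ∑ b, ∑ c,
            (2 * ∑ e, ginv p.1 e c *
              (pdB (fun y => ginv y a b) e p.1
                - ∑ s, ginv p.1 s a * vdT (fun q => K q e b) s p)) *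
            Matrix.det !![Xcomp K p a A, Xcomp K p a B, Xcomp K p a C;
                          Ycomp b A, Ycomp b B, Ycomp b C;
                          Ycomp c A, Ycomp c B, Ycomp c C])
          + ∑ k, ∑ b, ∑ c, Rup ginv K p k b c *
            Matrix.det !![Ycomp k A, Ycomp k B, Ycomp k C;
                          Ycomp b A, Ycomp b B, Ycomp b C;
                          Ycomp c A, Ycomp c B, Ycomp c C] := by
  intro p A B C
  have hsym : ∀ x a b, ginv x a b = ginv x b a := ginv_symm g ginv hgsym hinv'
  show SB (Lam ginv K) p A B C = Rhs ginv K p A B C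
  rcases A with x | x <;> rcases B with y | y <;> rcases C with z | z
  · exact caseLLL hginv hK p x y z
  · exact caseLLR hginv hK p x y z
  · rw [SB_cyc, Rhs_cyc, SB_cyc, Rhs_cyc]; exact caseLLR hginv hK p z x y
  · exact caseLRR hginv hK hsym p x y z
  · rw [SB_cyc, Rhs_cyc]; exact caseLLR hginv hK p y z x
  · rw [SB_cyc, Rhs_cyc]; exact caseLRR hginv hK hsym p y z x
  · rw [SB_cyc, Rhs_cyc, SB_cyc, Rhs_cyc]; exact caseLRR hginv hK hsym p z x y
  · exact caseRRR hginv hK hsym p x y z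
end

section
/- Let K be a linear connection on TE → E and g a pseudo-Riemannian metric. Then the 2-form Υ[g,K] = g_{λμ}(ḋ^λ − K_ν^λ{}_ρ ẋ^ρ d^ν) ∧ d^μ on TE is closed if and only if L[K] g^♭ = 0, where g^♭ = g_{λμ} ẋ^λ d^μ and L[K]g^♭ = (∂_λ g_{ρμ} + g_{σμ} K_λ^σ{}_ρ) ẋ^ρ d^λ ∧ d^μ. -/
open scoped BigOperators

section Helpers

variable {n : ℕ}

lemma clm_expand (f : (Fin n → ℝ) →L[ℝ] ℝ) (u : Fin n → ℝ) :
    f u = ∑ i, u i * f (Pi.single i 1) := by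
  conv_lhs => rw [← Finset.univ_sum_single u, map_sum]
  refine Finset.sum_congr rfl fun i _ => ?_
  have h : Pi.single i (u i) = u i • (Pi.single i (1:ℝ) : Fin n → ℝ) := by
    rw [← Pi.single_smul, smul_eq_mul, mul_one]
  rw [h, map_smul, smul_eq_mul]

lemma master_has (A : Fin n → Base n → ℝ) (B : Base n → ℝ) (p : TE n)
    (hA : ∀ e, DifferentiableAt ℝ (A e) p.1) (hB : DifferentiableAt ℝ B p.1) :
    HasFDerivAt (fun q : TE n => (∑ e, A e q.1 * q.2 e) + B q.1)
      ((∑ e, ((A e p.1 • ((ContinuousLinearMap.proj e).comp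
          (ContinuousLinearMap.snd ℝ (Fin n → ℝ) (Fin n → ℝ))))
        + (p.2 e • ((fderiv ℝ (A e) p.1).comp
          (ContinuousLinearMap.fst ℝ (Fin n → ℝ) (Fin n → ℝ))))))
       + ((fderiv ℝ B p.1).comp (ContinuousLinearMap.fst ℝ (Fin n → ℝ) (Fin n → ℝ)))) p := by
  have hfst : HasFDerivAt (fun q : TE n => q.1)
      (ContinuousLinearMap.fst ℝ (Fin n → ℝ) (Fin n → ℝ)) p := hasFDerivAt_fst
  have h1 : ∀ e : Fin n, HasFDerivAt (fun q : TE n => A e q.1 * q.2 e)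
      ((A e p.1 • ((ContinuousLinearMap.proj e).comp
          (ContinuousLinearMap.snd ℝ (Fin n → ℝ) (Fin n → ℝ))))
        + (p.2 e • ((fderiv ℝ (A e) p.1).comp
          (ContinuousLinearMap.fst ℝ (Fin n → ℝ) (Fin n → ℝ))))) p := by
    intro e
    have hAe : HasFDerivAt (fun q : TE n => A e q.1)
        ((fderiv ℝ (A e) p.1).comp (ContinuousLinearMap.fst ℝ (Fin n → ℝ) (Fin n → ℝ))) p :=
      ((hA e).hasFDerivAt).comp p hfst
    have hse : HasFDerivAt (fun q : TE n => q.2 e)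
        ((ContinuousLinearMap.proj e).comp (ContinuousLinearMap.snd ℝ (Fin n → ℝ) (Fin n → ℝ))) p :=
      ((ContinuousLinearMap.proj (R := ℝ) (φ := fun _ : Fin n => ℝ) e).comp
        (ContinuousLinearMap.snd ℝ (Fin n → ℝ) (Fin n → ℝ))).hasFDerivAt
    exact hAe.mul hse
  exact (HasFDerivAt.fun_sum (fun e _ => h1 e)).add ((hB.hasFDerivAt).comp p hfst)

lemma master (A : Fin n → Base n → ℝ) (B : Base n → ℝ) (p w : TE n)
    (hA : ∀ e, DifferentiableAt ℝ (A e) p.1) (hB : DifferentiableAt ℝ B p.1) :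
    fderiv ℝ (fun q : TE n => (∑ e, A e q.1 * q.2 e) + B q.1) p w
      = (∑ e, (fderiv ℝ (A e) p.1 w.1 * p.2 e + A e p.1 * w.2 e))
        + fderiv ℝ B p.1 w.1 := by
  rw [(master_has A B p hA hB).fderiv]
  simp [ContinuousLinearMap.sum_apply, mul_comm]
  ring_nf
  rw [Finset.sum_congr rfl]
  intro e _
  ring

lemma masterD (A : Fin n → Base n → ℝ) (B : Base n → ℝ) (p : TE n)
    (hA : ∀ e, DifferentiableAt ℝ (A e) p.1) (hB : DifferentiableAt ℝ B p.1) :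
    DifferentiableAt ℝ (fun q : TE n => (∑ e, A e q.1 * q.2 e) + B q.1) p :=
  (master_has A B p hA hB).differentiableAt

lemma fderivB1 {ι : Type*} [Fintype ι] (F : ι → Base n → ℝ) (c : ι → ℝ) (x u : Base n)
    (hF : ∀ i, DifferentiableAt ℝ (F i) x) :
    fderiv ℝ (fun y => ∑ i, F i y * c i) x u = ∑ i, fderiv ℝ (F i) x u * c i := by
  rw [fderiv_fun_sum (fun i _ => (hF i).mul_const _), ContinuousLinearMap.sum_apply]
  refine Finset.sum_congr rfl fun i _ => ?_
  rw [fderiv_mul_const (hF i)]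
  simp [mul_comm]

lemma diffB1 {ι : Type*} [Fintype ι] (F : ι → Base n → ℝ) (c : ι → ℝ) (x : Base n)
    (hF : ∀ i, DifferentiableAt ℝ (F i) x) :
    DifferentiableAt ℝ (fun y => ∑ i, F i y * c i) x :=
  DifferentiableAt.fun_sum (fun i _ => (hF i).mul_const _)

lemma fderiv_clm_const {f : Base n → ℝ} (hd : DifferentiableAt ℝ (fderiv ℝ f) x)
    (u u' : Fin n → ℝ) :
    fderiv ℝ (fun y => fderiv ℝ f y u) x u' = fderiv ℝ (fderiv ℝ f) x u' u := by
  rw [fderiv_clm_apply hd (differentiableAt_const u)]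
  simp

lemma fderiv_swap (f : Base n → ℝ) (hf : ContDiff ℝ (⊤ : ℕ∞) f) (x : Base n) (u u' : Fin n → ℝ) :
    fderiv ℝ (fun y => fderiv ℝ f y u) x u' = fderiv ℝ (fun y => fderiv ℝ f y u') x u := by
  have hd : DifferentiableAt ℝ (fderiv ℝ f) x :=
    ((hf.fderiv_right (m := 1) (by exact WithTop.coe_le_coe.mpr le_top)).differentiable one_ne_zero).differentiableAt
  rw [fderiv_clm_const hd u u', fderiv_clm_const hd u' u]
  exact (hf.contDiffAt.isSymmSndFDerivAt (by rw [minSmoothness_of_isRCLikeNormedField]; exact WithTop.coe_le_coe.mpr (le_top : (2 : ℕ∞) ≤ ⊤))).eq _ _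

lemma diff_fderiv_apply (f : Base n → ℝ) (hf : ContDiff ℝ (⊤ : ℕ∞) f) (u : Fin n → ℝ) (x : Base n) :
    DifferentiableAt ℝ (fun y => fderiv ℝ f y u) x := by
  have h1 : ContDiff ℝ 1 (fderiv ℝ f) := hf.fderiv_right (m := 1) (by exact WithTop.coe_le_coe.mpr le_top)
  exact ((h1.clm_apply contDiff_const).differentiable one_ne_zero).differentiableAt

end Helpers
section Main

variable {n : ℕ}

/-- coefficients of `L[K]g♭` -/
noncomputable def cc (g : Base n → Fin n → Fin n → ℝ) (G : Base n → Fin n → Fin n → Fin n → ℝ)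
    (x : Base n) (e l m : Fin n) : ℝ :=
  fderiv ℝ (fun y => g y e m) x (Pi.single l 1) + ∑ s, g x s m * G x l s e

/-- explicit form of `L[K]g♭` -/
noncomputable def Lform (g : Base n → Fin n → Fin n → ℝ)
    (G : Base n → Fin n → Fin n → Fin n → ℝ) : Form n 2 := fun q w =>
  ∑ a, ∑ b,
    ((fderiv ℝ (fun y => g y a b) q.1 (w 0).1 * q.2 a * (w 1).1 b
      - fderiv ℝ (fun y => g y a b) q.1 (w 1).1 * q.2 a * (w 0).1 b)
     + ∑ c, g q.1 a b * linK G q c a * ((w 0).1 c * (w 1).1 b - (w 1).1 c * (w 0).1 b))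

lemma fderiv_gflat_inner (g : Base n → Fin n → Fin n → ℝ)
    (hg : ∀ a b, ContDiff ℝ (⊤ : ℕ∞) (fun x => g x a b))
    (p w : TE n) (u : Fin n → ℝ) :
    fderiv ℝ (fun q : TE n => ∑ a, ∑ b, g q.1 a b * q.2 a * u b) p w
      = ∑ a, ((∑ b, fderiv ℝ (fun y => g y a b) p.1 w.1 * u b) * p.2 a
          + (∑ b, g p.1 a b * u b) * w.2 a) := by
  have hd : ∀ (a b : Fin n) (x : Base n), DifferentiableAt ℝ (fun y => g y a b) x :=
    fun a b x => ((hg a b).differentiable (by simp)).differentiableAt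
  have h0 : (fun q : TE n => ∑ a, ∑ b, g q.1 a b * q.2 a * u b)
      = fun q : TE n => (∑ a, (fun x : Base n => ∑ b, g x a b * u b) q.1 * q.2 a)
          + (fun _ : Base n => (0:ℝ)) q.1 := by
    funext q
    rw [add_zero]
    refine Finset.sum_congr rfl fun a _ => ?_
    rw [Finset.sum_mul]
    exact Finset.sum_congr rfl fun b _ => by ring
  rw [h0]
  refine (master (fun a x => ∑ b, g x a b * u b) (fun _ => (0:ℝ)) p w
    (fun a => diffB1 _ _ _ (fun b => hd a b p.1)) (differentiableAt_const 0)).trans ?_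
  simp only [fderiv_fun_const, Pi.zero_apply, ContinuousLinearMap.zero_apply, add_zero]
  refine Finset.sum_congr rfl fun a _ => ?_
  rw [fderivB1 _ _ _ _ (fun b => hd a b p.1)]

lemma extd_gflat (g : Base n → Fin n → Fin n → ℝ)
    (hg : ∀ a b, ContDiff ℝ (⊤ : ℕ∞) (fun x => g x a b)) (p : TE n) (v : Fin 2 → TE n) :
    extd (gflat g) p v = ∑ a, ∑ b,
      ((fderiv ℝ (fun y => g y a b) p.1 (v 0).1 * p.2 a + g p.1 a b * (v 0).2 a) * (v 1).1 b
      - (fderiv ℝ (fun y => g y a b) p.1 (v 1).1 * p.2 a + g p.1 a b * (v 1).2 a) * (v 0).1 b) := by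
  have s0 : (0:Fin 2).succAbove 0 = 1 := by decide
  have s1 : (1:Fin 2).succAbove 0 = 0 := by decide
  have e0 : (fun q : TE n => gflat g q (v ∘ (0:Fin 2).succAbove))
      = fun q : TE n => ∑ a, ∑ b, g q.1 a b * q.2 a * (v 1).1 b := by
    funext q; simp only [gflat, Function.comp_apply, s0]
  have e1 : (fun q : TE n => gflat g q (v ∘ (1:Fin 2).succAbove))
      = fun q : TE n => ∑ a, ∑ b, g q.1 a b * q.2 a * (v 0).1 b := by
    funext q; simp only [gflat, Function.comp_apply, s1]
  rw [show extd (gflat g) p v = (-1:ℝ)^((0:Fin 2):ℕ) *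
      fderiv ℝ (fun q => gflat g q (v ∘ (0:Fin 2).succAbove)) p (v 0)
      + (-1:ℝ)^((1:Fin 2):ℕ) *
      fderiv ℝ (fun q => gflat g q (v ∘ (1:Fin 2).succAbove)) p (v 1) from Fin.sum_univ_two _]
  rw [e0, e1, fderiv_gflat_inner g hg, fderiv_gflat_inner g hg]
  simp only [Fin.val_zero, Fin.val_one, pow_zero, pow_one, one_mul, neg_one_mul,
    Finset.sum_mul, add_mul, sub_mul, neg_add, ← Finset.sum_neg_distrib,
    Finset.sum_add_distrib, Finset.sum_sub_distrib]
  simp only [sub_eq_add_neg, neg_add, ← Finset.sum_neg_distrib, neg_mul, mul_neg, neg_neg]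
  simp only [mul_comm, mul_left_comm, mul_assoc]
lemma insK_gflat {n : ℕ} (g : Base n → Fin n → Fin n → ℝ) (K : TE n → Fin n → Fin n → ℝ) :
    insK (horK K) (gflat g) = gflat g := by
  funext q w
  simp only [insK, gflat, horK, Fin.cons_zero]
  rw [Fin.sum_univ_one]
  norm_num

lemma cons_one {n : ℕ} (x : TE n) (f : Fin 1 → TE n) :
    (Fin.cons x f : Fin 2 → TE n) 1 = f 0 := by
  rw [(by decide : (1:Fin 2) = Fin.succ 0), Fin.cons_succ]

lemma lieK_eq_Lform {n : ℕ} (g : Base n → Fin n → Fin n → ℝ)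
    (G : Base n → Fin n → Fin n → Fin n → ℝ)
    (hg : ∀ a b, ContDiff ℝ (⊤ : ℕ∞) (fun x => g x a b)) (p : TE n) (v : Fin 2 → TE n) :
    lieK (horK (linK G)) (gflat g) p v = Lform g G p v := by
  have s0 : (0:Fin 2).succAbove 0 = 1 := by decide
  have s1 : (1:Fin 2).succAbove 0 = 0 := by decide
  show insK (horK (linK G)) (extd (gflat g)) p v
      - extd (insK (horK (linK G)) (gflat g)) p v = _
  rw [insK_gflat]
  have hI : insK (horK (linK G)) (extd (gflat g)) p v
      = extd (gflat g) p (Fin.cons (horK (linK G) p (v 0)) (v ∘ (0:Fin 2).succAbove))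
      - extd (gflat g) p (Fin.cons (horK (linK G) p (v 1)) (v ∘ (1:Fin 2).succAbove)) := by
    simp only [insK]
    rw [Fin.sum_univ_two, Fin.val_zero, Fin.val_one, pow_zero, pow_one]
    ring
  rw [hI, extd_gflat g hg p v, extd_gflat g hg, extd_gflat g hg]
  simp only [Fin.cons_zero, cons_one, Function.comp_apply, s0, s1, Lform, horK]
  rw [← Finset.sum_sub_distrib, ← Finset.sum_sub_distrib]
  refine Finset.sum_congr rfl fun a _ => ?_
  rw [← Finset.sum_sub_distrib, ← Finset.sum_sub_distrib]
  refine Finset.sum_congr rfl fun b _ => ?_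
  have k0 : g p.1 a b * (∑ x, (v 0).1 x * linK G p x a)
      = (∑ c, g p.1 a b * linK G p c a * (v 0).1 c) := by
    rw [Finset.mul_sum]; exact Finset.sum_congr rfl fun c _ => by ring
  have k1 : g p.1 a b * (∑ x, (v 1).1 x * linK G p x a)
      = (∑ c, g p.1 a b * linK G p c a * (v 1).1 c) := by
    rw [Finset.mul_sum]; exact Finset.sum_congr rfl fun c _ => by ring
  have k2 : (∑ c, g p.1 a b * linK G p c a * ((v 0).1 c * (v 1).1 b - (v 1).1 c * (v 0).1 b))
      = (∑ c, g p.1 a b * linK G p c a * (v 0).1 c) * (v 1).1 b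
        - (∑ c, g p.1 a b * linK G p c a * (v 1).1 c) * (v 0).1 b := by
    rw [Finset.sum_mul, Finset.sum_mul, ← Finset.sum_sub_distrib]
    exact Finset.sum_congr rfl fun c _ => by ring
  rw [k2, k0, k1]
  ring
lemma sum3_perm {n : ℕ} (F : Fin n → Fin n → Fin n → ℝ) :
    ∑ a, ∑ b, ∑ l, F a b l = ∑ a, ∑ l, ∑ b, F a b l :=
  Finset.sum_congr rfl fun a _ => Finset.sum_comm

lemma sum4_perm {n : ℕ} (F : Fin n → Fin n → Fin n → Fin n → ℝ) :
    ∑ a, ∑ b, ∑ c, ∑ e, F a b c e = ∑ e, ∑ c, ∑ b, ∑ a, F a b c e := by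
  trans (∑ a, ∑ b, ∑ e, ∑ c, F a b c e)
  · exact Finset.sum_congr rfl fun a _ => Finset.sum_congr rfl fun b _ => Finset.sum_comm
  trans (∑ a, ∑ e, ∑ b, ∑ c, F a b c e)
  · exact Finset.sum_congr rfl fun a _ => Finset.sum_comm
  trans (∑ e, ∑ a, ∑ b, ∑ c, F a b c e)
  · exact Finset.sum_comm
  trans (∑ e, ∑ a, ∑ c, ∑ b, F a b c e)
  · exact Finset.sum_congr rfl fun e _ => Finset.sum_congr rfl fun a _ => Finset.sum_comm
  trans (∑ e, ∑ c, ∑ a, ∑ b, F a b c e)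
  · exact Finset.sum_congr rfl fun e _ => Finset.sum_comm
  exact Finset.sum_congr rfl fun e _ => Finset.sum_congr rfl fun c _ => Finset.sum_comm

lemma Lform_eq_cc {n : ℕ} (g : Base n → Fin n → Fin n → ℝ)
    (G : Base n → Fin n → Fin n → Fin n → ℝ) (q : TE n) (w : Fin 2 → TE n) :
    Lform g G q w = ∑ e, ∑ l, ∑ m, cc g G q.1 e l m * q.2 e
      * ((w 0).1 l * (w 1).1 m - (w 1).1 l * (w 0).1 m) := by
  have h1 : (∑ a, ∑ b, (fderiv ℝ (fun y => g y a b) q.1 (w 0).1 * q.2 a * (w 1).1 b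
        - fderiv ℝ (fun y => g y a b) q.1 (w 1).1 * q.2 a * (w 0).1 b))
      = ∑ e, ∑ l, ∑ m, fderiv ℝ (fun y => g y e m) q.1 (Pi.single l 1) * q.2 e
          * ((w 0).1 l * (w 1).1 m - (w 1).1 l * (w 0).1 m) := by
    trans (∑ a, ∑ b, ∑ l, fderiv ℝ (fun y => g y a b) q.1 (Pi.single l 1) * q.2 a
          * ((w 0).1 l * (w 1).1 b - (w 1).1 l * (w 0).1 b))
    · refine Finset.sum_congr rfl fun a _ => Finset.sum_congr rfl fun b _ => ?_
      rw [clm_expand (fderiv ℝ (fun y => g y a b) q.1) (w 0).1,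
        clm_expand (fderiv ℝ (fun y => g y a b) q.1) (w 1).1,
        Finset.sum_mul, Finset.sum_mul, Finset.sum_mul, Finset.sum_mul,
        ← Finset.sum_sub_distrib]
      exact Finset.sum_congr rfl fun l _ => by ring
    · exact sum3_perm _
  have h2 : (∑ a, ∑ b, ∑ c, g q.1 a b * linK G q c a
        * ((w 0).1 c * (w 1).1 b - (w 1).1 c * (w 0).1 b))
      = ∑ e, ∑ l, ∑ m, (∑ s, g q.1 s m * G q.1 l s e) * q.2 e
          * ((w 0).1 l * (w 1).1 m - (w 1).1 l * (w 0).1 m) := by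
    trans (∑ a, ∑ b, ∑ c, ∑ e, g q.1 a b * G q.1 c a e * q.2 e
          * ((w 0).1 c * (w 1).1 b - (w 1).1 c * (w 0).1 b))
    · refine Finset.sum_congr rfl fun a _ => Finset.sum_congr rfl fun b _ =>
        Finset.sum_congr rfl fun c _ => ?_
      simp only [linK, Finset.mul_sum, Finset.sum_mul]
      exact Finset.sum_congr rfl fun e _ => by ring
    trans (∑ e, ∑ c, ∑ b, ∑ a, g q.1 a b * G q.1 c a e * q.2 e
          * ((w 0).1 c * (w 1).1 b - (w 1).1 c * (w 0).1 b))
    · exact sum4_perm _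
    refine Finset.sum_congr rfl fun e _ => Finset.sum_congr rfl fun l _ =>
      Finset.sum_congr rfl fun m _ => ?_
    rw [Finset.sum_mul, Finset.sum_mul]
  calc Lform g G q w
      = (∑ a, ∑ b, (fderiv ℝ (fun y => g y a b) q.1 (w 0).1 * q.2 a * (w 1).1 b
          - fderiv ℝ (fun y => g y a b) q.1 (w 1).1 * q.2 a * (w 0).1 b))
        + (∑ a, ∑ b, ∑ c, g q.1 a b * linK G q c a
          * ((w 0).1 c * (w 1).1 b - (w 1).1 c * (w 0).1 b)) := by
        simp only [Lform, Finset.sum_add_distrib]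
    _ = _ := by
        rw [h1, h2]
        simp only [cc, add_mul, Finset.sum_add_distrib]
lemma Lform_zero {n : ℕ} (g : Base n → Fin n → Fin n → ℝ)
    (G : Base n → Fin n → Fin n → Fin n → ℝ)
    (hsym : ∀ x e l m, cc g G x e l m = cc g G x e m l)
    (q : TE n) (w : Fin 2 → TE n) : Lform g G q w = 0 := by
  rw [Lform_eq_cc]
  have h1 : (∑ e, ∑ l, ∑ m, cc g G q.1 e l m * q.2 e
        * ((w 0).1 l * (w 1).1 m - (w 1).1 l * (w 0).1 m))
      = ∑ e, ∑ l, ∑ m, cc g G q.1 e m l * q.2 e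
        * ((w 0).1 m * (w 1).1 l - (w 1).1 m * (w 0).1 l) :=
    Finset.sum_congr rfl fun e _ => Finset.sum_comm
  have h2 : (∑ e, ∑ l, ∑ m, cc g G q.1 e m l * q.2 e
        * ((w 0).1 m * (w 1).1 l - (w 1).1 m * (w 0).1 l))
      = -(∑ e, ∑ l, ∑ m, cc g G q.1 e l m * q.2 e
        * ((w 0).1 l * (w 1).1 m - (w 1).1 l * (w 0).1 m)) := by
    rw [← Finset.sum_neg_distrib]
    refine Finset.sum_congr rfl fun e _ => ?_
    rw [← Finset.sum_neg_distrib]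
    refine Finset.sum_congr rfl fun l _ => ?_
    rw [← Finset.sum_neg_distrib]
    refine Finset.sum_congr rfl fun m _ => ?_
    rw [← hsym q.1 e l m]
    ring
  have := h1.trans h2
  linarith

lemma UpsG_eq {n : ℕ} (g : Base n → Fin n → Fin n → ℝ)
    (G : Base n → Fin n → Fin n → Fin n → ℝ)
    (hg : ∀ a b, ContDiff ℝ (⊤ : ℕ∞) (fun x => g x a b)) (q : TE n) (w : Fin 2 → TE n) :
    UpsG g (linK G) q w = extd (gflat g) q w - Lform g G q w := by
  rw [extd_gflat g hg]
  simp only [UpsG, Lform]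
  rw [← Finset.sum_sub_distrib]
  refine Finset.sum_congr rfl fun a _ => ?_
  rw [← Finset.sum_sub_distrib]
  refine Finset.sum_congr rfl fun b _ => ?_
  have k2 : (∑ c, g q.1 a b * linK G q c a * ((w 0).1 c * (w 1).1 b - (w 1).1 c * (w 0).1 b))
      = g q.1 a b * (∑ c, linK G q c a * (w 0).1 c) * (w 1).1 b
        - g q.1 a b * (∑ c, linK G q c a * (w 1).1 c) * (w 0).1 b := by
    simp only [Finset.mul_sum, Finset.sum_mul, ← Finset.sum_sub_distrib]
    exact Finset.sum_congr rfl fun c _ => by ring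
  rw [k2]
  ring
noncomputable def AE {n : ℕ} (g : Base n → Fin n → Fin n → ℝ) (w : Fin 2 → TE n)
    (a : Fin n) (x : Base n) : ℝ :=
  ∑ b, (fderiv ℝ (fun y => g y a b) x (w 0).1 * (w 1).1 b
      - fderiv ℝ (fun y => g y a b) x (w 1).1 * (w 0).1 b)

noncomputable def BE {n : ℕ} (g : Base n → Fin n → Fin n → ℝ) (w : Fin 2 → TE n)
    (x : Base n) : ℝ :=
  ∑ a, ∑ b, g x a b * ((w 0).2 a * (w 1).1 b - (w 1).2 a * (w 0).1 b)

lemma Eshape {n : ℕ} (g : Base n → Fin n → Fin n → ℝ)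
    (hg : ∀ a b, ContDiff ℝ (⊤ : ℕ∞) (fun x => g x a b)) (w : Fin 2 → TE n) :
    (fun q : TE n => extd (gflat g) q w)
      = fun q : TE n => (∑ a, AE g w a q.1 * q.2 a) + BE g w q.1 := by
  funext q
  rw [extd_gflat g hg]
  simp only [AE, BE]
  rw [← Finset.sum_add_distrib]
  refine Finset.sum_congr rfl fun a _ => ?_
  rw [Finset.sum_mul, ← Finset.sum_add_distrib]
  refine Finset.sum_congr rfl fun b _ => ?_
  ring

lemma AEdiff {n : ℕ} (g : Base n → Fin n → Fin n → ℝ)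
    (hg : ∀ a b, ContDiff ℝ (⊤ : ℕ∞) (fun x => g x a b)) (w : Fin 2 → TE n) (a : Fin n)
    (x : Base n) : DifferentiableAt ℝ (AE g w a) x :=
  DifferentiableAt.fun_sum fun b _ =>
    ((diff_fderiv_apply _ (hg a b) _ x).mul_const _).sub
      ((diff_fderiv_apply _ (hg a b) _ x).mul_const _)

lemma BEdiff {n : ℕ} (g : Base n → Fin n → Fin n → ℝ)
    (hg : ∀ a b, ContDiff ℝ (⊤ : ℕ∞) (fun x => g x a b)) (w : Fin 2 → TE n)
    (x : Base n) : DifferentiableAt ℝ (BE g w) x :=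
  DifferentiableAt.fun_sum fun a _ => DifferentiableAt.fun_sum fun b _ =>
    (((hg a b).differentiable (by simp)).differentiableAt).mul_const _

lemma fderivB2 {n : ℕ} (F : Fin n → Fin n → Base n → ℝ) (c : Fin n → Fin n → ℝ)
    (x u : Base n) (hF : ∀ a b, DifferentiableAt ℝ (F a b) x) :
    fderiv ℝ (fun y => ∑ a, ∑ b, F a b y * c a b) x u
      = ∑ a, ∑ b, fderiv ℝ (F a b) x u * c a b := by
  rw [fderiv_fun_sum (fun a _ => diffB1 (F a) (c a) x (fun b => hF a b)),
    ContinuousLinearMap.sum_apply]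
  exact Finset.sum_congr rfl fun a _ => fderivB1 (F a) (c a) x u (fun b => hF a b)

lemma fderiv_AE {n : ℕ} (g : Base n → Fin n → Fin n → ℝ)
    (hg : ∀ a b, ContDiff ℝ (⊤ : ℕ∞) (fun x => g x a b)) (w : Fin 2 → TE n) (a : Fin n)
    (x u : Base n) :
    fderiv ℝ (AE g w a) x u
      = ∑ b, (fderiv ℝ (fun y => fderiv ℝ (fun z => g z a b) y (w 0).1) x u * (w 1).1 b
        - fderiv ℝ (fun y => fderiv ℝ (fun z => g z a b) y (w 1).1) x u * (w 0).1 b) := by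
  have h1 : AE g w a = fun x' =>
      (∑ b, (fun y => fderiv ℝ (fun z => g z a b) y (w 0).1) x' * (w 1).1 b)
      - (∑ b, (fun y => fderiv ℝ (fun z => g z a b) y (w 1).1) x' * (w 0).1 b) := by
    funext x'; simp only [AE]; rw [Finset.sum_sub_distrib]
  rw [h1, fderiv_fun_sub (diffB1 _ _ _ (fun b => diff_fderiv_apply _ (hg a b) _ x))
      (diffB1 _ _ _ (fun b => diff_fderiv_apply _ (hg a b) _ x)),
    ContinuousLinearMap.sub_apply,
    fderivB1 _ _ _ _ (fun b => diff_fderiv_apply _ (hg a b) _ x),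
    fderivB1 _ _ _ _ (fun b => diff_fderiv_apply _ (hg a b) _ x),
    ← Finset.sum_sub_distrib]

lemma fderiv_BE {n : ℕ} (g : Base n → Fin n → Fin n → ℝ)
    (hg : ∀ a b, ContDiff ℝ (⊤ : ℕ∞) (fun x => g x a b)) (w : Fin 2 → TE n) (x u : Base n) :
    fderiv ℝ (BE g w) x u
      = ∑ a, ∑ b, fderiv ℝ (fun z => g z a b) x u
          * ((w 0).2 a * (w 1).1 b - (w 1).2 a * (w 0).1 b) :=
  fderivB2 _ _ x u (fun a b => ((hg a b).differentiable (by simp)).differentiableAt)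

lemma dd_gflat {n : ℕ} (g : Base n → Fin n → Fin n → ℝ)
    (hg : ∀ a b, ContDiff ℝ (⊤ : ℕ∞) (fun x => g x a b)) (p : TE n) (v : Fin 3 → TE n) :
    extd (extd (gflat g)) p v = 0 := by
  have s00 : (0:Fin 3).succAbove 0 = 1 := by decide
  have s01 : (0:Fin 3).succAbove 1 = 2 := by decide
  have s10 : (1:Fin 3).succAbove 0 = 0 := by decide
  have s11 : (1:Fin 3).succAbove 1 = 2 := by decide
  have s20 : (2:Fin 3).succAbove 0 = 0 := by decide
  have s21 : (2:Fin 3).succAbove 1 = 1 := by decide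
  rw [show extd (extd (gflat g)) p v
      = (-1:ℝ)^((0:Fin 3):ℕ) *
        fderiv ℝ (fun q => extd (gflat g) q (v ∘ (0:Fin 3).succAbove)) p (v 0)
      + (-1:ℝ)^((1:Fin 3):ℕ) *
        fderiv ℝ (fun q => extd (gflat g) q (v ∘ (1:Fin 3).succAbove)) p (v 1)
      + (-1:ℝ)^((2:Fin 3):ℕ) *
        fderiv ℝ (fun q => extd (gflat g) q (v ∘ (2:Fin 3).succAbove)) p (v 2)
      from Fin.sum_univ_three _]
  rw [Eshape g hg, Eshape g hg, Eshape g hg,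
    master _ _ p (v 0) (fun a => AEdiff g hg _ a p.1) (BEdiff g hg _ p.1),
    master _ _ p (v 1) (fun a => AEdiff g hg _ a p.1) (BEdiff g hg _ p.1),
    master _ _ p (v 2) (fun a => AEdiff g hg _ a p.1) (BEdiff g hg _ p.1)]
  simp only [fderiv_AE g hg, fderiv_BE g hg, AE, Function.comp_apply, s00, s01, s10, s11,
    s20, s21, Fin.val_zero, Fin.val_one, Fin.val_two, pow_zero, pow_one, one_mul,
    neg_one_mul]
  norm_num
  simp only [Finset.sum_mul, mul_add, add_mul, mul_sub, sub_mul, sub_eq_add_neg, neg_add,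
    ← Finset.sum_neg_distrib, neg_mul, mul_neg, neg_neg, Finset.sum_add_distrib]
  simp only [← Finset.sum_add_distrib]
  refine Finset.sum_eq_zero fun a _ => ?_
  refine Finset.sum_eq_zero fun b _ => ?_
  rw [fderiv_swap _ (hg a b) p.1 (v 1).1 (v 0).1,
    fderiv_swap _ (hg a b) p.1 (v 2).1 (v 0).1,
    fderiv_swap _ (hg a b) p.1 (v 2).1 (v 1).1]
  ring
noncomputable def AL {n : ℕ} (g : Base n → Fin n → Fin n → ℝ)
    (G : Base n → Fin n → Fin n → Fin n → ℝ) (w : Fin 2 → TE n)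
    (e : Fin n) (x : Base n) : ℝ :=
  AE g w e x
  + ∑ a, ∑ b, ∑ c, g x a b * G x c a e * ((w 0).1 c * (w 1).1 b - (w 1).1 c * (w 0).1 b)

lemma sum4_rot {n : ℕ} (F : Fin n → Fin n → Fin n → Fin n → ℝ) :
    ∑ a, ∑ b, ∑ c, ∑ e, F a b c e = ∑ e, ∑ a, ∑ b, ∑ c, F a b c e := by
  trans (∑ a, ∑ b, ∑ e, ∑ c, F a b c e)
  · exact Finset.sum_congr rfl fun a _ => Finset.sum_congr rfl fun b _ => Finset.sum_comm
  trans (∑ a, ∑ e, ∑ b, ∑ c, F a b c e)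
  · exact Finset.sum_congr rfl fun a _ => Finset.sum_comm
  exact Finset.sum_comm

lemma Lshape {n : ℕ} (g : Base n → Fin n → Fin n → ℝ)
    (G : Base n → Fin n → Fin n → Fin n → ℝ) (w : Fin 2 → TE n) :
    (fun q : TE n => Lform g G q w)
      = fun q : TE n => (∑ e, AL g G w e q.1 * q.2 e) + (fun _ : Base n => (0:ℝ)) q.1 := by
  funext q
  simp only [Lform, AL, AE, add_zero, add_mul, Finset.sum_add_distrib]
  congr 1
  · refine Finset.sum_congr rfl fun a _ => ?_
    rw [Finset.sum_mul]
    refine Finset.sum_congr rfl fun b _ => by ring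
  · trans (∑ a, ∑ b, ∑ c, ∑ e, g q.1 a b * G q.1 c a e
        * ((w 0).1 c * (w 1).1 b - (w 1).1 c * (w 0).1 b) * q.2 e)
    · refine Finset.sum_congr rfl fun a _ => Finset.sum_congr rfl fun b _ =>
        Finset.sum_congr rfl fun c _ => ?_
      simp only [linK, Finset.mul_sum, Finset.sum_mul]
      exact Finset.sum_congr rfl fun e _ => by ring
    · rw [sum4_rot]
      refine Finset.sum_congr rfl fun e _ => ?_
      simp only [Finset.sum_mul]

lemma ALdiff {n : ℕ} (g : Base n → Fin n → Fin n → ℝ)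
    (G : Base n → Fin n → Fin n → Fin n → ℝ)
    (hg : ∀ a b, ContDiff ℝ (⊤ : ℕ∞) (fun x => g x a b))
    (hG : ∀ a b d, ContDiff ℝ (⊤ : ℕ∞) (fun x => G x a b d)) (w : Fin 2 → TE n) (e : Fin n)
    (x : Base n) : DifferentiableAt ℝ (AL g G w e) x :=
  (AEdiff g hg w e x).add <| DifferentiableAt.fun_sum fun a _ => DifferentiableAt.fun_sum fun b _ =>
    DifferentiableAt.fun_sum fun c _ =>
      ((((hg a b).differentiable (by simp)).differentiableAt).mul
        (((hG c a e).differentiable (by simp)).differentiableAt)).mul_const _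

lemma extd_expand {n : ℕ} (f : Form n 2) (p : TE n) (v : Fin 3 → TE n) :
    extd f p v
      = (-1:ℝ)^((0:Fin 3):ℕ) * fderiv ℝ (fun q => f q (v ∘ (0:Fin 3).succAbove)) p (v 0)
      + (-1:ℝ)^((1:Fin 3):ℕ) * fderiv ℝ (fun q => f q (v ∘ (1:Fin 3).succAbove)) p (v 1)
      + (-1:ℝ)^((2:Fin 3):ℕ) * fderiv ℝ (fun q => f q (v ∘ (2:Fin 3).succAbove)) p (v 2) :=
  Fin.sum_univ_three _

lemma extd_UpsG_split {n : ℕ} (g : Base n → Fin n → Fin n → ℝ)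
    (G : Base n → Fin n → Fin n → Fin n → ℝ)
    (hg : ∀ a b, ContDiff ℝ (⊤ : ℕ∞) (fun x => g x a b))
    (hG : ∀ a b d, ContDiff ℝ (⊤ : ℕ∞) (fun x => G x a b d)) (p : TE n) (v : Fin 3 → TE n) :
    extd (UpsG g (linK G)) p v
      = extd (extd (gflat g)) p v - extd (Lform g G) p v := by
  have hfun : ∀ w : Fin 2 → TE n, (fun q : TE n => UpsG g (linK G) q w)
      = fun q => extd (gflat g) q w - Lform g G q w :=
    fun w => funext fun q => UpsG_eq g G hg q w
  have hdE : ∀ w : Fin 2 → TE n, DifferentiableAt ℝ (fun q : TE n => extd (gflat g) q w) p := by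
    intro w
    rw [Eshape g hg w]
    exact masterD _ _ p (fun a => AEdiff g hg w a p.1) (BEdiff g hg w p.1)
  have hdL : ∀ w : Fin 2 → TE n, DifferentiableAt ℝ (fun q : TE n => Lform g G q w) p := by
    intro w
    rw [Lshape g G w]
    exact masterD _ _ p (fun e => ALdiff g G hg hG w e p.1) (differentiableAt_const 0)
  rw [extd_expand, extd_expand, extd_expand, hfun, hfun, hfun,
    fderiv_fun_sub (hdE _) (hdL _), fderiv_fun_sub (hdE _) (hdL _), fderiv_fun_sub (hdE _) (hdL _)]
  simp only [ContinuousLinearMap.sub_apply]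
  ring
lemma extd_Lform_special {n : ℕ} (g : Base n → Fin n → Fin n → ℝ)
    (G : Base n → Fin n → Fin n → Fin n → ℝ)
    (hg : ∀ a b, ContDiff ℝ (⊤ : ℕ∞) (fun x => g x a b))
    (hG : ∀ a b d, ContDiff ℝ (⊤ : ℕ∞) (fun x => G x a b d)) (x : Base n) (e l m : Fin n) :
    extd (Lform g G) ((x, 0) : TE n)
      ![((0 : Fin n → ℝ), Pi.single e 1), (Pi.single l 1, (0 : Fin n → ℝ)),
        (Pi.single m 1, (0 : Fin n → ℝ))]
      = cc g G x e l m - cc g G x e m l := by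
  set p : TE n := (x, 0) with hp
  set v : Fin 3 → TE n := ![((0 : Fin n → ℝ), Pi.single e 1), (Pi.single l 1, (0 : Fin n → ℝ)),
        (Pi.single m 1, (0 : Fin n → ℝ))] with hv
  rw [extd_expand, Lshape g G, Lshape g G, Lshape g G,
    master _ _ p (v 0) (fun a => ALdiff g G hg hG _ a p.1) (differentiableAt_const 0),
    master _ _ p (v 1) (fun a => ALdiff g G hg hG _ a p.1) (differentiableAt_const 0),
    master _ _ p (v 2) (fun a => ALdiff g G hg hG _ a p.1) (differentiableAt_const 0)]
  have hv0 : v 0 = ((0 : Fin n → ℝ), Pi.single e 1) := rfl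
  have hv1 : v 1 = (Pi.single l 1, (0 : Fin n → ℝ)) := rfl
  have hv2 : v 2 = (Pi.single m 1, (0 : Fin n → ℝ)) := rfl
  have hp2 : p.2 = 0 := rfl
  simp only [hv0, hv1, hv2, hp2, Pi.zero_apply, mul_zero, zero_add, add_zero, zero_mul,
    fderiv_fun_const, Pi.zero_apply, ContinuousLinearMap.zero_apply, Finset.sum_const_zero,
    Fin.val_zero, Fin.val_one, Fin.val_two, pow_zero, pow_one, one_mul, neg_one_mul, neg_zero]
  have key : (∑ a, AL g G (v ∘ (0:Fin 3).succAbove) a p.1 * (Pi.single e 1 : Fin n → ℝ) a)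
      = AL g G (v ∘ (0:Fin 3).succAbove) e p.1 := by
    rw [Finset.sum_eq_single e]
    · simp
    · intro b _ hb
      simp [Pi.single_apply, hb]
    · intro h; exact absurd (Finset.mem_univ e) h
  rw [key]
  have s00 : (0:Fin 3).succAbove 0 = 1 := by decide
  have s01 : (0:Fin 3).succAbove 1 = 2 := by decide
  simp only [AL, AE, Function.comp_apply, s00, s01, hv1, hv2, cc]
  have c1 : (∑ b, (fderiv ℝ (fun y => g y e b) p.1 (Pi.single l 1) * (Pi.single m 1 : Fin n → ℝ) b
      - fderiv ℝ (fun y => g y e b) p.1 (Pi.single m 1) * (Pi.single l 1 : Fin n → ℝ) b))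
      = fderiv ℝ (fun y => g y e m) p.1 (Pi.single l 1)
        - fderiv ℝ (fun y => g y e l) p.1 (Pi.single m 1) := by
    rw [Finset.sum_sub_distrib]
    congr 1
    · rw [Finset.sum_eq_single m]
      · simp
      · intro b _ hb; simp [Pi.single_apply, hb]
      · intro h; exact absurd (Finset.mem_univ m) h
    · rw [Finset.sum_eq_single l]
      · simp
      · intro b _ hb; simp [Pi.single_apply, hb]
      · intro h; exact absurd (Finset.mem_univ l) h
  have c2 : (∑ a, ∑ b, ∑ c, g p.1 a b * G p.1 c a e
        * ((Pi.single l 1 : Fin n → ℝ) c * (Pi.single m 1 : Fin n → ℝ) b - (Pi.single m 1 : Fin n → ℝ) c * (Pi.single l 1 : Fin n → ℝ) b))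
      = (∑ s, g p.1 s m * G p.1 l s e) - (∑ s, g p.1 s l * G p.1 m s e) := by
    rw [← Finset.sum_sub_distrib]
    refine Finset.sum_congr rfl fun a _ => ?_
    have inner : ∀ b, (∑ c, g p.1 a b * G p.1 c a e
        * ((Pi.single l 1 : Fin n → ℝ) c * (Pi.single m 1 : Fin n → ℝ) b - (Pi.single m 1 : Fin n → ℝ) c * (Pi.single l 1 : Fin n → ℝ) b))
        = g p.1 a b * G p.1 l a e * (Pi.single m 1 : Fin n → ℝ) b - g p.1 a b * G p.1 m a e * (Pi.single l 1 : Fin n → ℝ) b := by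
      intro b
      simp only [mul_sub, Finset.sum_sub_distrib]
      congr 1
      · rw [Finset.sum_eq_single l]
        · simp
        · intro c _ hc; simp [Pi.single_apply, hc]
        · intro h; exact absurd (Finset.mem_univ l) h
      · rw [Finset.sum_eq_single m]
        · simp
        · intro c _ hc; simp [Pi.single_apply, hc]
        · intro h; exact absurd (Finset.mem_univ m) h
    rw [Finset.sum_congr rfl fun b _ => inner b, Finset.sum_sub_distrib]
    congr 1
    · rw [Finset.sum_eq_single m]
      · simp
      · intro b _ hb; simp [Pi.single_apply, hb]
      · intro h; exact absurd (Finset.mem_univ m) h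
    · rw [Finset.sum_eq_single l]
      · simp
      · intro b _ hb; simp [Pi.single_apply, hb]
      · intro h; exact absurd (Finset.mem_univ l) h
  rw [c1, c2]
  ring

end Main

/-- Let `K` be a linear connection on `TE → E` (Christoffel symbols
`G_a^s{}_e(x)`) and `g` a pseudo-Riemannian metric.  Then the 2-form
`Υ[g,K] = g_{ab}(ḋ^a − K_c^a{}_e ẋ^e d^c) ∧ d^b` on `TE` is closed if and only if
`L[K] g♭ = 0`, where `g♭ = g_{ab} ẋ^a d^b`. -/
theorem stmt12 (n : ℕ) (g : Base n → Fin n → Fin n → ℝ)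
    (G : Base n → Fin n → Fin n → Fin n → ℝ)
    (hg : ∀ a b, ContDiff ℝ (⊤ : ℕ∞) (fun x => g x a b))
    (hgsym : ∀ x a b, g x a b = g x b a)
    (hG : ∀ a b d, ContDiff ℝ (⊤ : ℕ∞) (fun x => G x a b d)) :
    (∀ p (v : Fin 3 → TE n), extd (UpsG g (linK G)) p v = 0)
    ↔ (∀ p (v : Fin 2 → TE n), lieK (horK (linK G)) (gflat g) p v = 0) := by
  constructor
  · intro h
    have hsym : ∀ x e l m, cc g G x e l m = cc g G x e m l := by
      intro x e l m
      have h0 := h ((x, 0) : TE n)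
        ![((0 : Fin n → ℝ), Pi.single e 1), (Pi.single l 1, (0 : Fin n → ℝ)),
          (Pi.single m 1, (0 : Fin n → ℝ))]
      rw [extd_UpsG_split g G hg hG, dd_gflat g hg, extd_Lform_special g G hg hG] at h0
      linarith
    intro p v
    rw [lieK_eq_Lform g G hg, Lform_zero g G hsym]
  · intro h p v
    have hL : ∀ (q : TE n) (w : Fin 2 → TE n), Lform g G q w = 0 := by
      intro q w
      rw [← lieK_eq_Lform g G hg]
      exact h q w
    rw [extd_UpsG_split g G hg hG, dd_gflat g hg]
    have hzero : ∀ (i : Fin 3),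
        fderiv ℝ (fun q => Lform g G q (v ∘ i.succAbove)) p (v i) = 0 := by
      intro i
      rw [show (fun q : TE n => Lform g G q (v ∘ i.succAbove)) = fun _ => (0:ℝ)
        from funext fun q => hL q _]
      simp
    rw [extd_expand, hzero, hzero, hzero]
    ring
end
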